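/- arXiv:2009.03475 — 9 statements merged into one kernel-verified Lean document; each statement's English description precedes it below -/
import Mathlib

section
/- Let F be a set of k mutually orthogonal frequency squares of type (n; n/m) (each an n×n array on m symbols where each symbol occurs n/m times in every row and column, and any two squares superimposed give every ordered pair of symbols exactly (n/m)^2 times). Then k ≤ (n-1)^2/(m-1). -/
/-- `F` is a frequency square of type `(n;lam)` on `m` symbols: each symbol occurs
`lam` times in every row and every column. -/
def IsFreqSquare {n m : ℕ} (lam : ℕ) (F : Fin n → Fin n → Fin m) : Prop :=
  (∀ i : Fin n, ∀ s : Fin m, (Finset.univ.filter fun j => F i j = s).card = lam) ∧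
  (∀ j : Fin n, ∀ s : Fin m, (Finset.univ.filter fun i => F i j = s).card = lam)

/-- Two squares are orthogonal: every ordered pair of symbols occurs `lam ^ 2` times. -/
def AreOrth {n m : ℕ} (lam : ℕ) (F G : Fin n → Fin n → Fin m) : Prop :=
  ∀ a b : Fin m,
    (Finset.univ.filter fun p : Fin n × Fin n => F p.1 p.2 = a ∧ G p.1 p.2 = b).card = lam ^ 2

/-!
Work in `ℝ^(n×n)` with the standard inner product. For a frequency square `F` with `λ = n/m`,
subtracting `λ/n` from the indicator vector of each symbol class gives vectors orthogonal to all
row and column indicators, and orthogonality of two squares makes their centered vectors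
orthogonal to each other. Dropping one symbol per square and one column leaves
`k(m-1) + n + (n-1)` linearly independent vectors, so `k(m-1) + 2n - 1 ≤ n²`.
-/

open Finset

lemma card_filter_fst_eq {α β : Type*} [Fintype α] [Fintype β] [DecidableEq α] (a : α) :
    #{p : α × β | p.1 = a} = Fintype.card β := by
  rw [card_filter, Fintype.sum_prod_type, sum_eq_single a (fun _ _ h => by simp [h]) (by simp)]
  simp

lemma card_filter_snd_eq {α β : Type*} [Fintype α] [Fintype β] [DecidableEq β] (b : β) :
    #{p : α × β | p.2 = b} = Fintype.card α := by
  rw [card_filter, Fintype.sum_prod_type_right,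
    sum_eq_single b (fun _ _ h => by simp [h]) (by simp)]
  simp

section IndicatorVec

variable {ι : Type*}

noncomputable def indicatorVec (P : ι → Prop) [DecidablePred P] : EuclideanSpace ℝ ι :=
  WithLp.toLp 2 fun i => if P i then 1 else 0

@[simp]
lemma indicatorVec_apply (P : ι → Prop) [DecidablePred P] (i : ι) :
    indicatorVec P i = if P i then 1 else 0 :=
  rfl

lemma inner_indicatorVec [Fintype ι] (P Q : ι → Prop) [DecidablePred P] [DecidablePred Q] :
    inner ℝ (indicatorVec P) (indicatorVec Q) = #{i | P i ∧ Q i} := by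
  simp only [indicatorVec, PiLp.inner_apply, RCLike.inner_apply, MonoidWithZeroHom.map_ite_one_zero,
    mul_ite, mul_one, mul_zero, ← sum_boole, ite_and]

end IndicatorVec

section Orthogonal

variable {𝕜 E : Type*} [RCLike 𝕜] [NormedAddCommGroup E] [InnerProductSpace 𝕜 E]

lemma LinearIndependent.sum_type_of_inner_eq_zero {ι κ : Type*} {v : ι → E} {w : κ → E}
    (hv : LinearIndependent 𝕜 v) (hw : LinearIndependent 𝕜 w)
    (h : ∀ i j, inner 𝕜 (v i) (w j) = 0) : LinearIndependent 𝕜 (Sum.elim v w) :=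
  hv.sum_type hw (Submodule.isOrtho_span.2 (by rintro _ ⟨i, rfl⟩ _ ⟨j, rfl⟩; exact h i j)).disjoint

lemma linearIndependent_sigma_of_inner_eq_zero {η : Type*} {ιs : η → Type*}
    {v : ∀ j, ιs j → E} (hv : ∀ j, LinearIndependent 𝕜 (v j))
    (h : ∀ i j, i ≠ j → ∀ a b, inner 𝕜 (v i a) (v j b) = 0) :
    LinearIndependent 𝕜 fun x : Σ j, ιs j => v x.1 x.2 := by
  have hindep : iSupIndep fun j => Submodule.span 𝕜 (Set.range (v j)) :=
    (orthogonalFamily_iff_pairwise.2 fun i j hij => Submodule.isOrtho_span.2 <| by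
      rintro _ ⟨a, rfl⟩ _ ⟨b, rfl⟩; exact h i j hij a b).independent
  exact linearIndependent_iUnion_finite hv fun j t _ hj => hindep.disjoint_biSup hj

end Orthogonal

section Squares

variable {n m : ℕ}

noncomputable def symbolVec (F : Fin n → Fin n → Fin m) (s : Fin m) :
    EuclideanSpace ℝ (Fin n × Fin n) :=
  indicatorVec fun p => F p.1 p.2 = s

noncomputable def rowVec (i : Fin n) : EuclideanSpace ℝ (Fin n × Fin n) :=
  indicatorVec fun p => p.1 = i

noncomputable def colVec (j : Fin n) : EuclideanSpace ℝ (Fin n × Fin n) :=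
  indicatorVec fun p => p.2 = j

noncomputable def onesVec : EuclideanSpace ℝ (Fin n × Fin n) :=
  indicatorVec fun _ => True

/-- Centering by the symbol density `lam / n` makes this orthogonal to every row and column. -/
noncomputable def centeredSymbolVec (lam : ℕ) (F : Fin n → Fin n → Fin m) (s : Fin m) :
    EuclideanSpace ℝ (Fin n × Fin n) :=
  symbolVec F s - ((lam : ℝ) / n) • onesVec

variable {lam : ℕ} {F G : Fin n → Fin n → Fin m}

lemma IsFreqSquare.card_row_symbol (hF : IsFreqSquare lam F) (i : Fin n) (s : Fin m) :
    #{p : Fin n × Fin n | p.1 = i ∧ F p.1 p.2 = s} = lam := by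
  rw [← hF.1 i s, card_filter, card_filter, Fintype.sum_prod_type,
    sum_eq_single i (fun _ _ h => by simp [h]) (by simp)]
  simp

lemma IsFreqSquare.card_col_symbol (hF : IsFreqSquare lam F) (j : Fin n) (s : Fin m) :
    #{p : Fin n × Fin n | p.2 = j ∧ F p.1 p.2 = s} = lam := by
  rw [← hF.2 j s, card_filter, card_filter, Fintype.sum_prod_type_right,
    sum_eq_single j (fun _ _ h => by simp [h]) (by simp)]
  simp

lemma IsFreqSquare.card_symbol (hF : IsFreqSquare lam F) (s : Fin m) :
    #{p : Fin n × Fin n | F p.1 p.2 = s} = n * lam := by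
  rw [card_filter, Fintype.sum_prod_type]
  simp [hF.1 _ s]

lemma inner_centeredSymbolVec_rowVec (hF : IsFreqSquare lam F) (s : Fin m) (i : Fin n) :
    inner ℝ (centeredSymbolVec lam F s) (rowVec i) = 0 := by
  have hn : (n : ℝ) ≠ 0 := by exact_mod_cast (Fin.pos i).ne'
  simp [centeredSymbolVec, rowVec, symbolVec, onesVec, inner_sub_left, inner_smul_left,
    inner_indicatorVec, and_comm, hF.card_row_symbol, card_filter_fst_eq, hn]

lemma inner_centeredSymbolVec_colVec (hF : IsFreqSquare lam F) (s : Fin m) (j : Fin n) :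
    inner ℝ (centeredSymbolVec lam F s) (colVec j) = 0 := by
  have hn : (n : ℝ) ≠ 0 := by exact_mod_cast (Fin.pos j).ne'
  simp [centeredSymbolVec, colVec, symbolVec, onesVec, inner_sub_left, inner_smul_left,
    inner_indicatorVec, and_comm, hF.card_col_symbol, card_filter_snd_eq, hn]

lemma inner_centeredSymbolVec_of_areOrth (hn : 0 < n) (hF : IsFreqSquare lam F)
    (hG : IsFreqSquare lam G) (hFG : AreOrth lam F G) (a b : Fin m) :
    inner ℝ (centeredSymbolVec lam F a) (centeredSymbolVec lam G b) = 0 := by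
  have hn : (n : ℝ) ≠ 0 := by exact_mod_cast hn.ne'
  simp only [centeredSymbolVec, symbolVec, onesVec, inner_sub_left, inner_sub_right,
    real_inner_smul_left, real_inner_smul_right, inner_indicatorVec, true_and, and_true,
    filter_true, card_univ, Fintype.card_prod, Fintype.card_fin, hF.card_symbol, hG.card_symbol,
    hFG a b]
  push_cast
  field_simp
  ring

lemma IsFreqSquare.pos (hF : IsFreqSquare lam F) (hn : 0 < n) : 0 < lam := by
  let i : Fin n := ⟨0, hn⟩
  rw [← hF.1 i (F i i)]
  exact card_pos.2 ⟨i, by simp⟩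

lemma IsFreqSquare.exists_eq (hF : IsFreqSquare lam F) (hn : 0 < n) (s : Fin m) :
    ∃ i j, F i j = s := by
  have hlam := hF.pos hn
  rw [← hF.1 ⟨0, hn⟩ s, card_pos] at hlam
  obtain ⟨j, hj⟩ := hlam
  exact ⟨_, j, (mem_filter.1 hj).2⟩

/-- The `m` centered vectors of a square sum to zero, so one symbol `s₀` has to be left out. -/
lemma linearIndependent_centeredSymbolVec (hF : IsFreqSquare lam F) (hn : 0 < n) (s₀ : Fin m) :
    LinearIndependent ℝ fun s : {s // s ≠ s₀} => centeredSymbolVec lam F s := by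
  have hc : (lam : ℝ) / n ≠ 0 := div_ne_zero (by exact_mod_cast (hF.pos hn).ne') (by positivity)
  rw [Fintype.linearIndependent_iff]
  intro g hg
  have heval : ∀ i j, ∑ s, g s * ((if F i j = s then 1 else 0) - lam / n) = 0 := fun i j => by
    simpa [centeredSymbolVec, symbolVec, onesVec] using congr($hg (i, j))
  have hsum : ∑ s, g s = 0 := by
    obtain ⟨i, j, hij⟩ := hF.exists_eq hn s₀
    have hne (s : {s // s ≠ s₀}) : s₀ ≠ s := s.2.symm
    have := heval i j
    simp only [hij, hne, if_false, zero_sub, mul_neg, sum_neg_distrib,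
      ← sum_mul, neg_eq_zero, mul_eq_zero] at this
    exact this.resolve_right hc
  intro s
  obtain ⟨i, j, hij⟩ := hF.exists_eq hn s
  have := heval i j
  simpa only [hij, Subtype.coe_inj, mul_sub, mul_ite, mul_one, mul_zero, sum_sub_distrib,
    sum_ite_eq, mem_univ, if_true, ← sum_mul, hsum, zero_mul, sub_zero] using this

/-- The rows and the columns both sum to `onesVec`, so one column `j₀` has to be left out. -/
lemma linearIndependent_rowVec_colVec (j₀ : Fin n) :
    LinearIndependent ℝ (Sum.elim rowVec fun j : {j // j ≠ j₀} => colVec (j : Fin n)) := by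
  rw [Fintype.linearIndependent_iff]
  intro g hg
  have heval (i j : Fin n) :
      g (.inl i) + ∑ j' : {j // j ≠ j₀}, (if j = j' then g (.inr j') else 0) = 0 := by
    simpa [Fintype.sum_sum_type, rowVec, colVec] using congr($hg (i, j))
  have hrow (i : Fin n) : g (.inl i) = 0 := by
    have hne (j : {j // j ≠ j₀}) : j₀ ≠ j := j.2.symm
    simpa [hne] using heval i j₀
  have hcol (j : {j // j ≠ j₀}) : g (.inr j) = 0 := by
    simpa [hrow, Subtype.coe_inj] using heval j₀ j
  rintro (i | j)
  exacts [hrow i, hcol j]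

end Squares

theorem stmt0_general (n m k : ℕ) (hn : 0 < n) (hm : 2 ≤ m)
    (F : Fin k → Fin n → Fin n → Fin m)
    (hF : ∀ t, IsFreqSquare (n / m) (F t))
    (horth : ∀ s t, s ≠ t → AreOrth (n / m) (F s) (F t)) :
    (k : ℝ) ≤ ((n : ℝ) - 1) ^ 2 / ((m : ℝ) - 1) := by
  let s₀ : Fin m := ⟨0, by omega⟩
  let j₀ : Fin n := ⟨0, hn⟩
  have hsquares := linearIndependent_sigma_of_inner_eq_zero
      (v := fun t (s : {s // s ≠ s₀}) => centeredSymbolVec (n / m) (F t) s)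
      (fun t => linearIndependent_centeredSymbolVec (hF t) hn s₀)
      fun t t' htt' a b => inner_centeredSymbolVec_of_areOrth hn (hF t) (hF t') (horth t t' htt') a b
  have hall := hsquares.sum_type_of_inner_eq_zero (linearIndependent_rowVec_colVec j₀) <| by
    rintro ⟨t, s⟩ (i | j)
    exacts [inner_centeredSymbolVec_rowVec (hF t) s i, inner_centeredSymbolVec_colVec (hF t) s j]
  have hcard : k * (m - 1) + (n + (n - 1)) ≤ n * n := by
    simpa only [Fintype.card_sum, Fintype.card_sigma, Fintype.card_subtype_compl, Fintype.card_fin,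
      Fintype.card_unique, sum_const, card_univ, smul_eq_mul, finrank_euclideanSpace,
      Fintype.card_prod] using hall.fintype_card_le_finrank
  have hcardR := (Nat.cast_le (α := ℝ)).2 hcard
  push_cast [Nat.cast_sub (by omega : 1 ≤ m), Nat.cast_sub hn] at hcardR
  rw [le_div_iff₀ (sub_pos.2 (by exact_mod_cast hm))]
  linarith

theorem stmt0 (n m k : ℕ) (hn : 0 < n) (hm : 2 ≤ m) (hmn : m ∣ n)
    (F : Fin k → Fin n → Fin n → Fin m)
    (hF : ∀ t, IsFreqSquare (n / m) (F t))
    (horth : ∀ s t, s ≠ t → AreOrth (n / m) (F s) (F t)) :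
    (k : ℝ) ≤ ((n : ℝ) - 1) ^ 2 / ((m : ℝ) - 1) :=
  stmt0_general n m k hn hm F hF horth
end

section
/- Let {F_1,...,F_k} be a set of k mutually orthogonal frequency squares of type (n;n/m) with symbol set {0,...,m-1}. For r,c ∈ {0,...,n-1}, s ∈ {0,...,m-1}, 1 ≤ t ≤ k, define n×n 0-1 matrices: R_r is the indicator of row r (entry (i,j) equals 1 iff i=r), C_c the indicator of column c, and S_{s,t} the indicator of positions where F_t equals s. Then the set {J_n} ∪ {R_r : 1 ≤ r ≤ n-1} ∪ {C_c : 1 ≤ c ≤ n-1} ∪ {S_{s,t} : 1 ≤ s ≤ m-1, 1 ≤ t ≤ k} is linearly independent in the real vector space of n×n matrices, where J_n is the all-ones matrix. -/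
/-- Index type for the family: `J`, the rows `R_r` (`r ≠ 0`), the columns `C_c`
(`c ≠ 0`) and the symbol indicators `S_{s,t}` (`s ≠ 0`, `1 ≤ t ≤ k`). -/
abbrev LinIdx (n m k : ℕ) :=
  Unit ⊕ {r : Fin n // r.1 ≠ 0} ⊕ {c : Fin n // c.1 ≠ 0} ⊕ ({s : Fin m // s.1 ≠ 0} × Fin k)

/-- The family of `n × n` real matrices from Theorem `t:linindep`. -/
def linFam {n m k : ℕ} (F : Fin k → Fin n → Fin n → Fin m) :
    LinIdx n m k → Matrix (Fin n) (Fin n) ℝ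
  | Sum.inl _ => fun _ _ => 1
  | Sum.inr (Sum.inl r) => fun i _ => if i = r.1 then 1 else 0
  | Sum.inr (Sum.inr (Sum.inl c)) => fun _ j => if j = c.1 then 1 else 0
  | Sum.inr (Sum.inr (Sum.inr st)) => fun i j => if F st.2 i j = st.1.1 then 1 else 0

/-!
A vanishing combination reads `a + b i + c j + ∑ t, d t (F t i j) = 0` at every cell `(i, j)`,
where `b`, `c`, `d t` are the coefficients extended by zero to the excluded index `0`.
Rows, columns and each square are equidistributed functions on the grid, and any two of them
are jointly equidistributed (for two squares this is orthogonality). Summing the relation over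
the fibre `{φ = s}` of one of them therefore gives `N * f s + C = 0` with `N ≠ 0` and `C`
independent of `s`, because every other term has the same sum over each fibre. So each of
`b`, `c`, `d t` is constant, hence zero, and then `a = 0`.
-/

open Finset

section FiberSums

variable {Ω α β : Type*} [Fintype Ω] [DecidableEq α] [DecidableEq β]

def IsEquidistributed (φ : Ω → α) (N : ℕ) : Prop :=
  ∀ a, #{ω | φ ω = a} = N

def IsJointlyEquidistributed (φ : Ω → α) (ψ : Ω → β) (K : ℕ) : Prop :=
  ∀ a b, #{ω | φ ω = a ∧ ψ ω = b} = K

def HasConstFiberSums (φ : Ω → α) (R : Ω → ℝ) : Prop :=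
  ∃ C, ∀ a, ∑ ω with φ ω = a, R ω = C

lemma IsJointlyEquidistributed.symm {φ : Ω → α} {ψ : Ω → β} {K : ℕ}
    (h : IsJointlyEquidistributed φ ψ K) : IsJointlyEquidistributed ψ φ K := fun b a => by
  simpa only [and_comm] using h a b

lemma IsJointlyEquidistributed.isEquidistributed_right [Fintype α] {φ : Ω → α} {ψ : Ω → β}
    {K : ℕ} (h : IsJointlyEquidistributed φ ψ K) : IsEquidistributed ψ (Fintype.card α * K) :=
  fun b => by
    rw [card_eq_sum_card_fiberwise (f := φ) (t := univ) fun _ _ => mem_univ _]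
    simp only [filter_filter, and_comm (a := ψ _ = b), h _ b, sum_const, card_univ, smul_eq_mul]

lemma IsEquidistributed.ne_zero [Nonempty Ω] {φ : Ω → α} {N : ℕ} (h : IsEquidistributed φ N) :
    N ≠ 0 := by
  obtain ⟨ω⟩ := ‹Nonempty Ω›
  rw [← h (φ ω)]
  exact (card_pos.2 ⟨ω, by simp⟩).ne'

lemma IsEquidistributed.hasConstFiberSums_const {φ : Ω → α} {N : ℕ} (h : IsEquidistributed φ N)
    (c : ℝ) : HasConstFiberSums φ fun _ => c :=
  ⟨N * c, fun a => by rw [sum_const, h a, nsmul_eq_mul]⟩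

lemma IsJointlyEquidistributed.hasConstFiberSums_comp [Fintype β] {φ : Ω → α} {ψ : Ω → β}
    {K : ℕ} (h : IsJointlyEquidistributed φ ψ K) (f : β → ℝ) :
    HasConstFiberSums φ fun ω => f (ψ ω) :=
  ⟨K * ∑ b, f b, fun a => by
    rw [← sum_fiberwise _ ψ, mul_sum]
    refine sum_congr rfl fun b _ => ?_
    rw [sum_congr rfl fun ω hω => by rw [(mem_filter.1 hω).2], sum_const, filter_filter, h a b,
      nsmul_eq_mul]⟩

lemma HasConstFiberSums.add {φ : Ω → α} {R S : Ω → ℝ} (hR : HasConstFiberSums φ R)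
    (hS : HasConstFiberSums φ S) : HasConstFiberSums φ (R + S) := by
  obtain ⟨C, hC⟩ := hR
  obtain ⟨D, hD⟩ := hS
  exact ⟨C + D, fun a => by simp only [Pi.add_apply, sum_add_distrib, hC, hD]⟩

lemma HasConstFiberSums.sum {ι : Type*} {φ : Ω → α} {s : Finset ι} {R : ι → Ω → ℝ}
    (h : ∀ i ∈ s, HasConstFiberSums φ (R i)) : HasConstFiberSums φ fun ω => ∑ i ∈ s, R i ω := by
  choose C hC using h
  exact ⟨∑ i ∈ s.attach, C i i.2, fun a => by
    rw [sum_comm, ← sum_attach]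
    exact sum_congr rfl fun i _ => hC i i.2 a⟩

lemma IsEquidistributed.eq_of_add_eq_zero [Nonempty Ω] {φ : Ω → α} {N : ℕ}
    (hφ : IsEquidistributed φ N) {R : Ω → ℝ} (hR : HasConstFiberSums φ R) {f : α → ℝ}
    (h : ∀ ω, f (φ ω) + R ω = 0) (a b : α) : f a = f b := by
  obtain ⟨C, hC⟩ := hR
  have key : ∀ a, (N : ℝ) * f a + C = 0 := fun a => by
    have : ∑ ω with φ ω = a, (f (φ ω) + R ω) = 0 := sum_eq_zero fun ω _ => h ω
    rwa [sum_add_distrib, hC, sum_congr rfl fun ω hω => by rw [(mem_filter.1 hω).2], sum_const,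
      hφ a, nsmul_eq_mul] at this
  have hN : (N : ℝ) ≠ 0 := Nat.cast_ne_zero.2 hφ.ne_zero
  exact mul_left_cancel₀ hN (by linarith [key a, key b])

end FiberSums

section Grid

variable {α β γ : Type*} [Fintype α] [Fintype β] [DecidableEq γ]

lemma isJointlyEquidistributed_fst_snd [DecidableEq α] [DecidableEq β] :
    IsJointlyEquidistributed (Prod.fst : α × β → α) Prod.snd 1 := fun a b => by
  rw [card_eq_one]
  exact ⟨(a, b), by ext; simp [Prod.ext_iff]⟩

lemma isJointlyEquidistributed_fst_uncurry [DecidableEq α] {f : α → β → γ} {K : ℕ}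
    (h : ∀ a c, #{b | f a b = c} = K) : IsJointlyEquidistributed Prod.fst (Function.uncurry f) K :=
  fun a c => by
    rw [← h a c]
    refine card_bij (fun p _ => p.2) ?_ ?_ ?_ <;> aesop

lemma isJointlyEquidistributed_snd_uncurry [DecidableEq β] {f : α → β → γ} {K : ℕ}
    (h : ∀ b c, #{a | f a b = c} = K) : IsJointlyEquidistributed Prod.snd (Function.uncurry f) K :=
  fun b c => by
    rw [← h b c]
    refine card_bij (fun p _ => p.1) ?_ ?_ ?_ <;> aesop

variable {n m k lam : ℕ} {F : Fin k → Fin n → Fin n → Fin m}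

lemma IsFreqSquare.isJointlyEquidistributed_fst {G : Fin n → Fin n → Fin m}
    (hG : IsFreqSquare lam G) : IsJointlyEquidistributed Prod.fst (Function.uncurry G) lam :=
  isJointlyEquidistributed_fst_uncurry hG.1

lemma IsFreqSquare.isJointlyEquidistributed_snd {G : Fin n → Fin n → Fin m}
    (hG : IsFreqSquare lam G) : IsJointlyEquidistributed Prod.snd (Function.uncurry G) lam :=
  isJointlyEquidistributed_snd_uncurry hG.2

lemma AreOrth.isJointlyEquidistributed {G H : Fin n → Fin n → Fin m} (h : AreOrth lam G H) :
    IsJointlyEquidistributed (Function.uncurry G) (Function.uncurry H) (lam ^ 2) :=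
  h

theorem coeffs_const_of_add_eq_zero [NeZero n] (hF : ∀ t, IsFreqSquare lam (F t))
    (horth : ∀ s t, s ≠ t → AreOrth lam (F s) (F t)) {a : ℝ} {b c : Fin n → ℝ}
    {d : Fin k → Fin m → ℝ} (h : ∀ i j, a + b i + c j + ∑ t, d t (F t i j) = 0) :
    (∀ i i', b i = b i') ∧ (∀ j j', c j = c j') ∧ ∀ t s s', d t s = d t s' := by
  have hrowcol := isJointlyEquidistributed_fst_snd (α := Fin n) (β := Fin n)
  have hrows := hrowcol.symm.isEquidistributed_right
  have hcols := hrowcol.isEquidistributed_right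
  refine ⟨?_, ?_, fun t => ?_⟩
  · have hR : HasConstFiberSums Prod.fst fun p : Fin n × Fin n =>
        a + c p.2 + ∑ t, d t (F t p.1 p.2) :=
      ((hrows.hasConstFiberSums_const a).add (hrowcol.hasConstFiberSums_comp c)).add
        (.sum fun t _ => (hF t).isJointlyEquidistributed_fst.hasConstFiberSums_comp (d t))
    exact hrows.eq_of_add_eq_zero hR fun p => by linarith [h p.1 p.2]
  · have hR : HasConstFiberSums Prod.snd fun p : Fin n × Fin n =>
        a + b p.1 + ∑ t, d t (F t p.1 p.2) :=
      ((hcols.hasConstFiberSums_const a).add (hrowcol.symm.hasConstFiberSums_comp b)).add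
        (.sum fun t _ => (hF t).isJointlyEquidistributed_snd.hasConstFiberSums_comp (d t))
    exact hcols.eq_of_add_eq_zero hR fun p => by linarith [h p.1 p.2]
  · have hsquare := (hF t).isJointlyEquidistributed_fst.isEquidistributed_right
    have hR : HasConstFiberSums (Function.uncurry (F t)) fun p =>
        a + b p.1 + c p.2 + ∑ t' ∈ univ.erase t, d t' (F t' p.1 p.2) :=
      (((hsquare.hasConstFiberSums_const a).add
        ((hF t).isJointlyEquidistributed_fst.symm.hasConstFiberSums_comp b)).add
        ((hF t).isJointlyEquidistributed_snd.symm.hasConstFiberSums_comp c)).add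
        (.sum fun t' ht' => (horth t t' (ne_of_mem_erase ht').symm).isJointlyEquidistributed
          |>.hasConstFiberSums_comp (d t'))
    refine hsquare.eq_of_add_eq_zero hR fun p => ?_
    have := h p.1 p.2
    rw [← add_sum_erase _ _ (mem_univ t)] at this
    change d t (F t p.1 p.2) + _ = 0
    linarith

end Grid

section Decoding

open Function

lemma Fintype.sum_ite_eq_val_extend {ι M : Type*} [DecidableEq ι] [AddCommMonoid M]
    {p : ι → Prop} [Fintype (Subtype p)] (f : Subtype p → M) (y : ι) :
    ∑ x : Subtype p, (if y = x.1 then f x else 0) = extend Subtype.val f 0 y := by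
  by_cases hy : p y
  · rw [show y = (⟨y, hy⟩ : Subtype p).1 from rfl, Subtype.val_injective.extend_apply]
    exact (Finset.sum_congr rfl fun x _ => if_congr Subtype.ext_iff.symm rfl rfl).trans
      (Fintype.sum_ite_eq _ f)
  · rw [extend_apply' _ _ _ fun ⟨x, hx⟩ => hy (hx ▸ x.2), Pi.zero_apply]
    exact Finset.sum_eq_zero fun x _ => if_neg fun h : y = x.1 => hy (h ▸ x.2)

lemma extend_val_eq_zero_of_forall_eq {N : ℕ} {M : Type*} [Zero M]
    {e : {x : Fin N // x.1 ≠ 0} → M}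
    (h : ∀ x y, extend Subtype.val e 0 x = extend Subtype.val e 0 y) (x : Fin N) :
    extend Subtype.val e 0 x = 0 := by
  rw [h x ⟨0, x.pos⟩, extend_apply' _ _ _ fun ⟨y, hy⟩ => y.2 (by simp [hy])]
  rfl

variable {n m k : ℕ} (F : Fin k → Fin n → Fin n → Fin m)

lemma linFam_sum_apply (g : LinIdx n m k → ℝ) (i j : Fin n) :
    (∑ x, g x • linFam F x) i j = g (.inl ()) + extend Subtype.val (fun r => g (.inr (.inl r))) 0 i
      + extend Subtype.val (fun c => g (.inr (.inr (.inl c)))) 0 j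
      + ∑ t, extend Subtype.val (fun s => g (.inr (.inr (.inr (s, t))))) 0 (F t i j) := by
  simp only [Fintype.sum_sum_type, Fintype.sum_prod_type, Matrix.sum_apply, Matrix.smul_apply,
    smul_eq_mul, linFam, mul_ite, mul_one, mul_zero, Fintype.sum_unique,
    Fintype.sum_ite_eq_val_extend]
  rw [Finset.sum_comm]
  simp only [Fintype.sum_ite_eq_val_extend, add_assoc]

end Decoding

theorem stmt1_general (n m k : ℕ) (hn : 0 < n)
    (F : Fin k → Fin n → Fin n → Fin m)
    (hF : ∀ t, IsFreqSquare (n / m) (F t))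
    (horth : ∀ s t, s ≠ t → AreOrth (n / m) (F s) (F t)) :
    LinearIndependent ℝ (linFam F) := by
  have : NeZero n := ⟨hn.ne'⟩
  rw [Fintype.linearIndependent_iff]
  intro g hg
  set b := Function.extend Subtype.val (fun r => g (.inr (.inl r))) (0 : Fin n → ℝ)
  set c := Function.extend Subtype.val (fun j => g (.inr (.inr (.inl j)))) (0 : Fin n → ℝ)
  set d : Fin k → Fin m → ℝ := fun t =>
    Function.extend Subtype.val (fun s => g (.inr (.inr (.inr (s, t))))) 0
  have hrel : ∀ i j, g (.inl ()) + b i + c j + ∑ t, d t (F t i j) = 0 := fun i j => by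
    rw [← linFam_sum_apply, hg]
    rfl
  obtain ⟨hb, hc, hd⟩ := coeffs_const_of_add_eq_zero hF horth hrel
  have hb0 : ∀ i, b i = 0 := extend_val_eq_zero_of_forall_eq hb
  have hc0 : ∀ j, c j = 0 := extend_val_eq_zero_of_forall_eq hc
  have hd0 : ∀ t s, d t s = 0 := fun t => extend_val_eq_zero_of_forall_eq (hd t)
  rintro (⟨⟨⟩⟩ | r | j | ⟨s, t⟩)
  · simpa [hb0, hc0, hd0] using hrel 0 0
  · exact (Subtype.val_injective.extend_apply _ _ r).symm.trans (hb0 r)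
  · exact (Subtype.val_injective.extend_apply _ _ j).symm.trans (hc0 j)
  · exact (Subtype.val_injective.extend_apply _ _ s).symm.trans (hd0 t s)

theorem stmt1 (n m k : ℕ) (hn : 0 < n) (hm : 2 ≤ m) (hmn : m ∣ n)
    (F : Fin k → Fin n → Fin n → Fin m)
    (hF : ∀ t, IsFreqSquare (n / m) (F t))
    (horth : ∀ s t, s ≠ t → AreOrth (n / m) (F s) (F t)) :
    LinearIndependent ℝ (linFam F) :=
  stmt1_general n m k hn F hF horth
end

section
/- Let F be a set of k-MOFS(n;n/m) and let F' be its d-dilation, obtained by replacing every entry of every square by a d×d constant block. If F' is maximal, then F is maximal and d is not divisible by m. -/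
open Finset

lemma card_filter_prod {α β : Type*} [Fintype α] [Fintype β]
    (R : α × β → Prop) [DecidablePred R] :
    ((univ : Finset (α × β)).filter R).card
      = ∑ x : α, ((univ : Finset β).filter fun y => R (x, y)).card := by
  rw [Finset.card_filter, Fintype.sum_prod_type]
  exact Finset.sum_congr rfl fun x _ => (Finset.card_filter _ _).symm

lemma card_filter_fst {α β : Type*} [Fintype α] [Fintype β]
    (P : α → Prop) [DecidablePred P] :
    ((univ : Finset (α × β)).filter fun p => P p.1).card
      = ((univ : Finset α).filter P).card * Fintype.card β := by
  rw [card_filter_prod]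
  have : ∀ x : α, ((univ : Finset β).filter fun _ => P x).card
      = if P x then Fintype.card β else 0 := by
    intro x
    by_cases h : P x <;> simp [h, Finset.filter_true_of_mem, Finset.filter_false_of_mem]
  simp only [this]
  rw [← Finset.sum_filter]
  simp [Finset.sum_const, mul_comm]

lemma card_filter_snd {α β : Type*} [Fintype α] [Fintype β]
    (P : β → Prop) [DecidablePred P] :
    ((univ : Finset (α × β)).filter fun p => P p.2).card
      = Fintype.card α * ((univ : Finset β).filter P).card := by
  rw [card_filter_prod]
  have : (∑ _x : α, ((univ : Finset β).filter P).card) = Fintype.card α * ((univ : Finset β).filter P).card := by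
    rw [Finset.sum_const, Finset.card_univ, smul_eq_mul]
  exact this

lemma key_bij {N a b : ℕ} (hb : 0 < b) (hN : N = a * b)
    (P : Fin N → Prop) [DecidablePred P]
    (Q : Fin a → Fin b → Prop) [∀ x y, Decidable (Q x y)]
    (h : ∀ (j : Fin N) (h1 : j.1 / b < a) (h2 : j.1 % b < b),
        (P j ↔ Q ⟨j.1 / b, h1⟩ ⟨j.1 % b, h2⟩)) :
    (univ.filter P).card
      = ((univ : Finset (Fin a × Fin b)).filter fun p => Q p.1 p.2).card := by
  have hdiv : ∀ j : Fin N, j.1 / b < a := fun j =>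
    (Nat.div_lt_iff_lt_mul hb).2 (hN ▸ j.2)
  have hmod : ∀ j : Fin N, j.1 % b < b := fun j => Nat.mod_lt _ hb
  have hback : ∀ p : Fin a × Fin b, p.1.1 * b + p.2.1 < N := by
    intro p
    have h1 := p.1.2
    have h2 := p.2.2
    have : p.1.1 * b + p.2.1 < (p.1.1 + 1) * b := by nlinarith
    have : (p.1.1 + 1) * b ≤ a * b := Nat.mul_le_mul_right b (by omega)
    omega
  refine Finset.card_bij' (fun j _ => (⟨j.1 / b, hdiv j⟩, ⟨j.1 % b, hmod j⟩))
    (fun p _ => ⟨p.1.1 * b + p.2.1, hback p⟩) ?_ ?_ ?_ ?_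
  · intro j hj
    simp only [Finset.mem_filter, Finset.mem_univ, true_and] at hj ⊢
    exact (h j (hdiv j) (hmod j)).1 hj
  · intro p hp
    simp only [Finset.mem_filter, Finset.mem_univ, true_and] at hp ⊢
    have e1 : (p.1.1 * b + p.2.1) / b = p.1.1 := by
      rw [add_comm, Nat.add_mul_div_right _ _ hb, Nat.div_eq_of_lt p.2.2, Nat.zero_add]
    have e2 : (p.1.1 * b + p.2.1) % b = p.2.1 := by
      rw [add_comm, Nat.add_mul_mod_self_right, Nat.mod_eq_of_lt p.2.2]
    set j : Fin N := ⟨p.1.1 * b + p.2.1, hback p⟩ with hjdef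
    refine (h j (hdiv j) (hmod j)).2 ?_
    have q1 : (⟨j.1 / b, hdiv j⟩ : Fin a) = p.1 := Fin.ext e1
    have q2 : (⟨j.1 % b, hmod j⟩ : Fin b) = p.2 := Fin.ext e2
    rw [q1, q2]
    exact hp
  · intro j hj
    apply Fin.ext
    exact Nat.div_add_mod' j.1 b
  · intro p hp
    apply Prod.ext <;> apply Fin.ext
    · show (p.1.1 * b + p.2.1) / b = p.1.1
      rw [add_comm, Nat.add_mul_div_right _ _ hb, Nat.div_eq_of_lt p.2.2, Nat.zero_add]
    · show (p.1.1 * b + p.2.1) % b = p.2.1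
      rw [add_comm, Nat.add_mul_mod_self_right, Nat.mod_eq_of_lt p.2.2]

lemma key_bij2 {N a b : ℕ} (hb : 0 < b) (hN : N = a * b)
    (P : Fin N × Fin N → Prop) [DecidablePred P]
    (Q : Fin a × Fin a → Fin b × Fin b → Prop) [∀ x y, Decidable (Q x y)]
    (h : ∀ (p : Fin N × Fin N) (h1 : p.1.1 / b < a) (h2 : p.2.1 / b < a)
        (h3 : p.1.1 % b < b) (h4 : p.2.1 % b < b),
        (P p ↔ Q (⟨p.1.1 / b, h1⟩, ⟨p.2.1 / b, h2⟩) (⟨p.1.1 % b, h3⟩, ⟨p.2.1 % b, h4⟩))) :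
    (univ.filter P).card
      = ((univ : Finset ((Fin a × Fin a) × (Fin b × Fin b))).filter
          fun q => Q q.1 q.2).card := by
  have hdiv : ∀ j : Fin N, j.1 / b < a := fun j =>
    (Nat.div_lt_iff_lt_mul hb).2 (hN ▸ j.2)
  have hmod : ∀ j : Fin N, j.1 % b < b := fun j => Nat.mod_lt _ hb
  have hback : ∀ (x : Fin a) (y : Fin b), x.1 * b + y.1 < N := by
    intro x y
    have h1 := x.2
    have h2 := y.2
    have : x.1 * b + y.1 < (x.1 + 1) * b := by nlinarith
    have : (x.1 + 1) * b ≤ a * b := Nat.mul_le_mul_right b (by omega)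
    omega
  have ediv : ∀ (x : Fin a) (y : Fin b), (x.1 * b + y.1) / b = x.1 := by
    intro x y
    rw [add_comm, Nat.add_mul_div_right _ _ hb, Nat.div_eq_of_lt y.2, Nat.zero_add]
  have emod : ∀ (x : Fin a) (y : Fin b), (x.1 * b + y.1) % b = y.1 := by
    intro x y
    rw [add_comm, Nat.add_mul_mod_self_right, Nat.mod_eq_of_lt y.2]
  refine Finset.card_bij'
    (fun p _ => ((⟨p.1.1 / b, hdiv p.1⟩, ⟨p.2.1 / b, hdiv p.2⟩),
                 (⟨p.1.1 % b, hmod p.1⟩, ⟨p.2.1 % b, hmod p.2⟩)))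
    (fun q _ => (⟨q.1.1.1 * b + q.2.1.1, hback q.1.1 q.2.1⟩,
                 ⟨q.1.2.1 * b + q.2.2.1, hback q.1.2 q.2.2⟩)) ?_ ?_ ?_ ?_
  · intro p hp
    simp only [Finset.mem_filter, Finset.mem_univ, true_and] at hp ⊢
    exact (h p (hdiv p.1) (hdiv p.2) (hmod p.1) (hmod p.2)).1 hp
  · intro q hq
    simp only [Finset.mem_filter, Finset.mem_univ, true_and] at hq ⊢
    set p : Fin N × Fin N := (⟨q.1.1.1 * b + q.2.1.1, hback q.1.1 q.2.1⟩,
        ⟨q.1.2.1 * b + q.2.2.1, hback q.1.2 q.2.2⟩) with hpdef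
    refine (h p (hdiv p.1) (hdiv p.2) (hmod p.1) (hmod p.2)).2 ?_
    have q1 : (⟨p.1.1 / b, hdiv p.1⟩ : Fin a) = q.1.1 := Fin.ext (ediv _ _)
    have q2 : (⟨p.2.1 / b, hdiv p.2⟩ : Fin a) = q.1.2 := Fin.ext (ediv _ _)
    have q3 : (⟨p.1.1 % b, hmod p.1⟩ : Fin b) = q.2.1 := Fin.ext (emod _ _)
    have q4 : (⟨p.2.1 % b, hmod p.2⟩ : Fin b) = q.2.2 := Fin.ext (emod _ _)
    rw [q1, q2, q3, q4]
    exact hq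
  · intro p hp
    apply Prod.ext <;> apply Fin.ext <;> exact Nat.div_add_mod' _ b
  · intro q hq
    apply Prod.ext <;> apply Prod.ext <;> apply Fin.ext
    · exact ediv q.1.1 q.2.1
    · exact ediv q.1.2 q.2.2
    · exact emod q.1.1 q.2.1
    · exact emod q.1.2 q.2.2

lemma mod_two_case (m x : ℕ) (hm : 0 < m) (hx : x < 2 * m) :
    x % m = if x < m then x else x - m := by
  by_cases h : x < m
  · simp [h, Nat.mod_eq_of_lt]
  · rw [if_neg h, Nat.mod_eq_sub_mod (by omega), Nat.mod_eq_of_lt (by omega)]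

lemma count_shift (m : ℕ) (hm : 0 < m) (c : ℕ) (s : Fin m) :
    ((univ : Finset (Fin m)).filter fun y => (c + y.1) % m = s.1).card = 1 := by
  rw [Finset.card_eq_one]
  have hr : c % m < m := Nat.mod_lt _ hm
  refine ⟨⟨(s.1 + m - c % m) % m, Nat.mod_lt _ hm⟩, ?_⟩
  ext y
  simp only [Finset.mem_filter, Finset.mem_univ, true_and, Finset.mem_singleton]
  have hs := s.2
  have hy := y.2
  have e0 : (c + y.1) % m = (c % m + y.1) % m := (Nat.mod_add_mod c m y.1).symm
  rw [e0]
  have h1 : (c % m + y.1) % m = if c % m + y.1 < m then c % m + y.1 else c % m + y.1 - m :=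
    mod_two_case m _ hm (by omega)
  have h2 : (s.1 + m - c % m) % m
      = if s.1 + m - c % m < m then s.1 + m - c % m else s.1 + m - c % m - m :=
    mod_two_case m _ hm (by omega)
  rw [h1, Fin.ext_iff]
  show _ ↔ y.1 = (s.1 + m - c % m) % m
  rw [h2]
  split_ifs <;> omega

lemma count_shift_mul (m N : ℕ) (hm : 0 < m) (hN : m ∣ N) (c : ℕ) (s : Fin m) :
    ((univ : Finset (Fin N)).filter fun y => (c + y.1) % m = s.1).card = N / m := by
  have hNm : N = (N / m) * m := (Nat.div_mul_cancel hN).symm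
  have step := key_bij (a := N / m) (b := m) hm hNm
    (fun y : Fin N => (c + y.1) % m = s.1)
    (fun (_ : Fin (N / m)) (y : Fin m) => (c + y.1) % m = s.1)
    (by
      intro j h1 h2
      show (c + j.1) % m = s.1 ↔ (c + j.1 % m) % m = s.1
      rw [Nat.add_mod_mod])
  rw [step]
  have step2 := card_filter_snd (α := Fin (N / m)) (fun y : Fin m => (c + y.1) % m = s.1)
  rw [step2, count_shift m hm c s, Fintype.card_fin, mul_one]

/-- A family of squares is maximal if no frequency square of the same type is
orthogonal to every member. -/
def IsMaxFamily {n m k : ℕ} (lam : ℕ) (F : Fin k → Fin n → Fin n → Fin m) : Prop :=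
  ¬ ∃ G : Fin n → Fin n → Fin m, IsFreqSquare lam G ∧ ∀ t, AreOrth lam (F t) G

/-- The `d`-dilation of a square: every entry is replaced by a `d × d` constant block. -/
def dilate {n m : ℕ} (d : ℕ) (hd : 0 < d) (F : Fin n → Fin n → Fin m) :
    Fin (d * n) → Fin (d * n) → Fin m :=
  fun i j =>
    F ⟨i.1 / d, (Nat.div_lt_iff_lt_mul hd).2 (Nat.lt_of_lt_of_eq i.2 (Nat.mul_comm d n))⟩
      ⟨j.1 / d, (Nat.div_lt_iff_lt_mul hd).2 (Nat.lt_of_lt_of_eq j.2 (Nat.mul_comm d n))⟩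


theorem stmt2 (n m k d : ℕ) (hn : 0 < n) (hm : 2 ≤ m) (hmn : m ∣ n) (hd : 0 < d)
    (F : Fin k → Fin n → Fin n → Fin m)
    (hF : ∀ t, IsFreqSquare (n / m) (F t))
    (horth : ∀ s t, s ≠ t → AreOrth (n / m) (F s) (F t))
    (hmax : IsMaxFamily (d * n / m) (fun t => dilate d hd (F t))) :
    IsMaxFamily (n / m) F ∧ ¬ m ∣ d := by
  have hm0 : 0 < m := by omega
  obtain ⟨lam, hlam⟩ := hmn
  have hmn : m ∣ n := ⟨lam, hlam⟩
  have hnm : n / m = lam := by rw [hlam, Nat.mul_div_cancel_left _ hm0]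
  have hdnm : d * n / m = d * lam := by rw [Nat.mul_div_assoc d hmn, hnm]
  have hNdn : d * n = n * d := Nat.mul_comm d n
  have hidx : ∀ i : Fin (d * n), i.1 / d < n := fun i =>
    (Nat.div_lt_iff_lt_mul hd).2 (Nat.lt_of_lt_of_eq i.2 (Nat.mul_comm d n))
  constructor
  · rintro ⟨G, hG, hGo⟩
    apply hmax
    refine ⟨dilate d hd G, ⟨?_, ?_⟩, ?_⟩
    · intro i s
      set I0 : Fin n := ⟨i.1 / d, hidx i⟩ with hI0
      have step := key_bij (a := n) (b := d) hd hNdn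
        (fun j : Fin (d * n) => dilate d hd G i j = s)
        (fun (x : Fin n) (_ : Fin d) => G I0 x = s)
        (fun j h1 h2 => Iff.rfl)
      rw [step, card_filter_fst (fun x : Fin n => G I0 x = s), hG.1 I0 s,
        Fintype.card_fin, hnm, hdnm, Nat.mul_comm]
    · intro j s
      set J0 : Fin n := ⟨j.1 / d, hidx j⟩ with hJ0
      have step := key_bij (a := n) (b := d) hd hNdn
        (fun i : Fin (d * n) => dilate d hd G i j = s)
        (fun (x : Fin n) (_ : Fin d) => G x J0 = s)
        (fun i h1 h2 => Iff.rfl)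
      rw [step, card_filter_fst (fun x : Fin n => G x J0 = s), hG.2 J0 s,
        Fintype.card_fin, hnm, hdnm, Nat.mul_comm]
    · intro t a b0
      have step := key_bij2 (a := n) (b := d) hd hNdn
        (fun p : Fin (d * n) × Fin (d * n) =>
          dilate d hd (F t) p.1 p.2 = a ∧ dilate d hd G p.1 p.2 = b0)
        (fun (IJ : Fin n × Fin n) (_ : Fin d × Fin d) =>
          F t IJ.1 IJ.2 = a ∧ G IJ.1 IJ.2 = b0)
        (fun p h1 h2 h3 h4 => Iff.rfl)
      show (Finset.filter _ Finset.univ).card = _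
      rw [step, card_filter_fst
        (fun IJ : Fin n × Fin n => F t IJ.1 IJ.2 = a ∧ G IJ.1 IJ.2 = b0),
        hGo t a b0, Fintype.card_prod, Fintype.card_fin, hnm, hdnm]
      ring
  · intro hmd
    obtain ⟨e, he⟩ := hmd
    apply hmax
    have hmdn : m ∣ d * n := hmn.mul_left d
    refine ⟨fun i j => ⟨(i.1 + j.1) % m, Nat.mod_lt _ hm0⟩, ⟨?_, ?_⟩, ?_⟩
    · intro i s
      have : (Finset.univ.filter
            fun j : Fin (d * n) => (⟨(i.1 + j.1) % m, Nat.mod_lt _ hm0⟩ : Fin m) = s)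
          = Finset.univ.filter fun j : Fin (d * n) => (i.1 + j.1) % m = s.1 := by
        ext j; simp [Fin.ext_iff]
      rw [this, count_shift_mul m (d * n) hm0 hmdn i.1 s]
    · intro j s
      have : (Finset.univ.filter
            fun i : Fin (d * n) => (⟨(i.1 + j.1) % m, Nat.mod_lt _ hm0⟩ : Fin m) = s)
          = Finset.univ.filter fun i : Fin (d * n) => (j.1 + i.1) % m = s.1 := by
        ext i; simp [Fin.ext_iff, Nat.add_comm]
      rw [this, count_shift_mul m (d * n) hm0 hmdn j.1 s]
    · intro t a b0
      have hmodd : ∀ x y : ℕ, (x + y) % m = (x % d + y % d) % m := by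
        intro x y
        conv_lhs => rw [← Nat.div_add_mod x d, ← Nat.div_add_mod y d]
        have : d * (x / d) + x % d + (d * (y / d) + y % d)
            = x % d + y % d + m * (e * (x / d) + e * (y / d)) := by rw [he]; ring
        rw [this, Nat.add_mul_mod_self_left]
      have step := key_bij2 (a := n) (b := d) hd hNdn
        (fun p : Fin (d * n) × Fin (d * n) =>
          dilate d hd (F t) p.1 p.2 = a ∧
            (⟨(p.1.1 + p.2.1) % m, Nat.mod_lt _ hm0⟩ : Fin m) = b0)
        (fun (IJ : Fin n × Fin n) (rs : Fin d × Fin d) =>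
          F t IJ.1 IJ.2 = a ∧ (rs.1.1 + rs.2.1) % m = b0.1)
        (by
          intro p h1 h2 h3 h4
          refine and_congr Iff.rfl ?_
          rw [Fin.ext_iff]
          show (p.1.1 + p.2.1) % m = b0.1 ↔ (p.1.1 % d + p.2.1 % d) % m = b0.1
          rw [hmodd])
      show (Finset.filter _ Finset.univ).card = _
      rw [step]
      have split : ((Finset.univ : Finset ((Fin n × Fin n) × (Fin d × Fin d))).filter
            fun q => F t q.1.1 q.1.2 = a ∧ (q.2.1.1 + q.2.2.1) % m = b0.1)
          = (Finset.univ.filter fun IJ : Fin n × Fin n => F t IJ.1 IJ.2 = a) ×ˢ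
            (Finset.univ.filter fun rs : Fin d × Fin d => (rs.1.1 + rs.2.1) % m = b0.1) := by
        rw [← Finset.univ_product_univ, Finset.filter_product
          (fun IJ : Fin n × Fin n => F t IJ.1 IJ.2 = a)
          (fun rs : Fin d × Fin d => (rs.1.1 + rs.2.1) % m = b0.1)]
      rw [split, Finset.card_product]
      have c1 : (Finset.univ.filter fun IJ : Fin n × Fin n => F t IJ.1 IJ.2 = a).card
          = n * lam := by
        rw [card_filter_prod (fun IJ : Fin n × Fin n => F t IJ.1 IJ.2 = a)]
        have : ∀ x : Fin n,
            ((Finset.univ : Finset (Fin n)).filter fun y => F t x y = a).card = lam := by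
          intro x; rw [(hF t).1 x a, hnm]
        calc (∑ x : Fin n, ((Finset.univ : Finset (Fin n)).filter fun y => F t x y = a).card)
            = ∑ _x : Fin n, lam := Finset.sum_congr rfl fun x _ => this x
          _ = n * lam := by rw [Finset.sum_const, Finset.card_univ, Fintype.card_fin, smul_eq_mul]
      have c2 : (Finset.univ.filter
            fun rs : Fin d × Fin d => (rs.1.1 + rs.2.1) % m = b0.1).card = d * e := by
        rw [card_filter_prod (fun rs : Fin d × Fin d => (rs.1.1 + rs.2.1) % m = b0.1)]
        have : ∀ x : Fin d,
            ((Finset.univ : Finset (Fin d)).filter fun y => (x.1 + y.1) % m = b0.1).card = e := by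
          intro x
          rw [count_shift_mul m d hm0 ⟨e, he⟩ x.1 b0, he, Nat.mul_div_cancel_left _ hm0]
        calc (∑ x : Fin d, ((Finset.univ : Finset (Fin d)).filter
                fun y => (x.1 + y.1) % m = b0.1).card)
            = ∑ _x : Fin d, e := Finset.sum_congr rfl fun x _ => this x
          _ = d * e := by rw [Finset.sum_const, Finset.card_univ, Fintype.card_fin, smul_eq_mul]
      rw [c1, c2, hdnm, hlam, he]
      ring
end

section
/- Let q = p^u be a prime power and let p^v be the highest power of p dividing n. If 0 ≤ v − uh < u/2 for some integer h ≥ 1, then there exists a maximal set of (q^h−1)^2/(q−1) mutually orthogonal frequency squares of type (n; n/q). -/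
/-!
Write `n = q^h d` and let `K = 𝔽_q`, `V = K^h`. Label the rows and columns of an `n × n` array by
vectors of `V`, each vector used `d` times. For `a ∈ ℙ(V)` (through a fixed representative) and
`b ∈ V ∖ 0`, the square `(i, j) ↦ a ⬝ xᵢ + b ⬝ xⱼ` is a frequency square of type `(n; n/q)`, and two
such squares are orthogonal because their functionals `a ⊕ b` on `V ⊕ V` are linearly independent;
this gives `(q^h - 1)² / (q - 1)` MOFS.

If `G` were a further frequency square orthogonal to all of them, let `N(w)` count the cells with
label `w ∈ V ⊕ V` carrying a fixed symbol of `G`. Every affine hyperplane of `V ⊕ V` has total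
weight `(n/q)²`: by the frequency property of `G` if its functional only sees rows or only
columns, and by orthogonality otherwise. Double counting over the hyperplanes through `0` then
forces `N(0) q^(2h-1) = (n/q)²`, i.e. `q N(0) = d²`, impossible since `v_p(d) = v - u h < u / 2`.
-/

open Finset Matrix
open scoped LinearAlgebra.Projectivization

section Counting

variable {α β : Type*} [Fintype α] [Fintype β] [DecidableEq β]

theorem card_filter_comp_eq_mul_of_card_fiber (f : α → β) {d : ℕ}
    (hf : ∀ b, #{a | f a = b} = d) (P : β → Prop) [DecidablePred P] :
    #{a | P (f a)} = #{b | P b} * d := by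
  rw [card_eq_sum_card_fiberwise (f := f) (t := {b | P b}) (fun a ha => by simpa using ha),
    sum_const_nat]
  intro b hb
  rw [← hf b]
  congr 1
  ext a
  simp only [mem_filter, mem_univ, true_and] at hb ⊢
  exact ⟨And.right, fun h => ⟨h ▸ hb, h⟩⟩

theorem card_fiber_mul_card_of_surjective {G M F : Type*} [AddGroup G] [Fintype G] [AddGroup M]
    [Fintype M] [DecidableEq M] [FunLike F G M] [AddMonoidHomClass F G M] (f : F)
    (hf : Function.Surjective f) (y : M) :
    #{g | f g = y} * Fintype.card M = Fintype.card G := by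
  have := card_filter_comp_eq_mul_of_card_fiber f (d := #{g | f g = y})
    (fun b => AddMonoidHom.card_fiber_eq_of_mem_range f (hf b) (hf y)) (fun _ => True)
  simpa [mul_comm] using this.symm

theorem exists_card_fiber_eq {n d : ℕ} (hn : n = Fintype.card β * d) :
    ∃ x : Fin n → β, ∀ b, #{i | x i = b} = d := by
  let E : Fin n ≃ β × Fin d := (finCongr hn).trans
    (finProdFinEquiv.symm.trans ((Fintype.equivFin β).symm.prodCongr (Equiv.refl _)))
  refine ⟨fun i => (E i).1, fun b => ?_⟩
  rw [card_equiv E (t := {b} ×ˢ univ)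
    (by simp only [mem_filter, mem_univ, true_and, mem_product, mem_singleton, and_true,
      imp_true_iff]), card_product, card_singleton, card_univ, Fintype.card_fin, one_mul]

theorem card_fiber_sumElim {ι R : Type*} [Fintype ι] [DecidableEq R] {x : α → ι → R} {d : ℕ}
    (hx : ∀ v, #{i | x i = v} = d) (w : ι ⊕ ι → R) :
    #{ij : α × α | x ij.1 ⊕ᵥ x ij.2 = w} = d ^ 2 := by
  have : univ.filter (fun ij : α × α => x ij.1 ⊕ᵥ x ij.2 = w) =
      univ.filter (fun i => x i = w ∘ Sum.inl) ×ˢ univ.filter (fun j => x j = w ∘ Sum.inr) := by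
    ext ij
    simp only [mem_filter, mem_univ, true_and, mem_product]
    constructor
    · rintro rfl
      exact ⟨rfl, rfl⟩
    · rintro ⟨h₁, h₂⟩
      rw [h₁, h₂, Sum.elim_comp_inl_inr]
  rw [this, card_product, hx, hx, sq]

end Counting

section FrequencySquares

variable {n m lam : ℕ}

theorem IsFreqSquare.card_filter_and_fst {G : Fin n → Fin n → Fin m} (hG : IsFreqSquare lam G)
    (P : Fin n → Prop) [DecidablePred P] (s : Fin m) :
    #{ij : Fin n × Fin n | P ij.1 ∧ G ij.1 ij.2 = s} = #{i | P i} * lam := by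
  rw [card_filter, Fintype.sum_prod_type, card_filter, sum_mul]
  refine sum_congr rfl fun i _ => ?_
  by_cases hi : P i <;> simp [hi, ← hG.1 i s]

theorem IsFreqSquare.card_filter_and_snd {G : Fin n → Fin n → Fin m} (hG : IsFreqSquare lam G)
    (P : Fin n → Prop) [DecidablePred P] (s : Fin m) :
    #{ij : Fin n × Fin n | P ij.2 ∧ G ij.1 ij.2 = s} = #{j | P j} * lam := by
  rw [card_filter, Fintype.sum_prod_type_right, card_filter, sum_mul]
  refine sum_congr rfl fun j _ => ?_
  by_cases hj : P j <;> simp [hj, ← hG.2 j s]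

theorem AreOrth.comp_left {F G : Fin n → Fin n → Fin m} (h : AreOrth lam F G)
    (e : Equiv.Perm (Fin m)) : AreOrth lam (fun i j => e (F i j)) G := fun a b => by
  simpa only [← Equiv.eq_symm_apply] using h (e.symm a) b

end FrequencySquares

section Hyperplanes

variable {K ι : Type*} [Field K] [Fintype K] [DecidableEq K] [Fintype ι] [DecidableEq ι]

theorem card_filter_mulVec_eq_mul {κ : Type*} [Fintype κ] [DecidableEq κ] {A : Matrix κ ι K}
    (hA : LinearIndependent K A.row) (y : κ → K) :
    #{x | A *ᵥ x = y} * Fintype.card K ^ Fintype.card κ = Fintype.card K ^ Fintype.card ι := by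
  have hsurj : Function.Surjective A.mulVecLin := by
    rw [← LinearMap.range_eq_top]
    apply Submodule.eq_top_of_finrank_eq
    rw [← Matrix.rank, hA.rank_matrix, Module.finrank_fintype_fun_eq_card]
  convert card_fiber_mul_card_of_surjective A.mulVecLin hsurj y <;> simp

theorem card_filter_dotProduct_eq_mul {a : ι → K} (ha : a ≠ 0) (c : K) :
    #{x | a ⬝ᵥ x = c} * Fintype.card K = Fintype.card K ^ Fintype.card ι := by
  have hA : LinearIndependent K (replicateRow (Fin 1) a).row :=
    linearIndependent_unique_iff.mpr ha
  simpa [funext_iff, replicateRow_mulVec_eq_const] using card_filter_mulVec_eq_mul hA (fun _ => c)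

theorem apply_zero_mul_pow_eq_of_sum_hyperplane_eq [Nonempty ι] {N : (ι → K) → ℕ} {L : ℕ}
    (hN : ∀ ω : ι → K, ω ≠ 0 → ∀ c, ∑ w with ω ⬝ᵥ w = c, N w = L) :
    N 0 * Fintype.card K ^ Fintype.card ι = L * Fintype.card K := by
  set q := Fintype.card K
  set Q := q ^ Fintype.card ι
  have hQ : Fintype.card (ι → K) = Q := by simp [Q, q]
  have hone : (fun _ => 1 : ι → K) ≠ 0 :=
    fun h => one_ne_zero (congrFun h (Classical.arbitrary ι))
  have htotal : ∑ w, N w = q * L := by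
    rw [← sum_fiberwise univ (fun w => (fun _ => (1 : K)) ⬝ᵥ w) N]
    simp [hN _ hone, q]
  -- `S` sums `N` over all pairs `(ψ, w)` with `ψ ⬝ᵥ w = 0`, first by `ψ`, then by `w`.
  set S := ∑ ψ : ι → K, ∑ w with ψ ⬝ᵥ w = 0, N w
  have hS_rows : S + L = ∑ w, N w + Q * L := by
    have hcard : #(univ.erase (0 : ι → K)) = Q - 1 := by
      rw [card_erase_of_mem (mem_univ _), card_univ, hQ]
    have hQ1 : 1 ≤ Q := Nat.one_le_pow _ _ Fintype.card_pos
    rw [show S = _ from (add_sum_erase univ _ (mem_univ 0)).symm,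
      sum_const_nat (fun ψ hψ => hN ψ (ne_of_mem_erase hψ) 0), hcard]
    simp only [zero_dotProduct, filter_true]
    zify [hQ1]
    ring
  have hS_cols : S * q + N 0 * Q = N 0 * Q * q + (∑ w, N w) * Q := by
    have hS : S = ∑ w, N w * #{ψ | ψ ⬝ᵥ w = 0} := by
      simp only [S, sum_filter, card_filter, mul_sum, mul_ite, mul_one, mul_zero]
      exact sum_comm
    have hZ : ∀ w ∈ univ.erase (0 : ι → K), N w * #{ψ | ψ ⬝ᵥ w = 0} * q = N w * Q := by
      intro w hw
      simp_rw [mul_assoc, dotProduct_comm _ w]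
      rw [card_filter_dotProduct_eq_mul (ne_of_mem_erase hw)]
    rw [hS, sum_mul, ← add_sum_erase univ _ (mem_univ 0), sum_congr rfl hZ, sum_mul,
      ← add_sum_erase univ _ (mem_univ 0)]
    simp only [dotProduct_zero, filter_true, card_univ, hQ]
    ring
  have hq : 2 ≤ q := Fintype.one_lt_card
  have key : (q - 1 : ℤ) * (L * q - N 0 * Q) = 0 := by
    zify at hS_rows hS_cols htotal
    linear_combination hS_cols - (q : ℤ) * hS_rows + ((Q : ℤ) - q) * htotal
  have hq1 : (q - 1 : ℤ) ≠ 0 := by omega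
  exact_mod_cast (sub_eq_zero.mp ((mul_eq_zero.mp key).resolve_left hq1)).symm

end Hyperplanes

section LinearSquares

variable {K ι : Type*} [Field K] [Fintype K] [DecidableEq K] [Fintype ι] [DecidableEq ι]
  {n m d lam : ℕ} {x : Fin n → ι → K}

def linearSquare (σ : K ≃ Fin m) (x : Fin n → ι → K) (ω : ι ⊕ ι → K) :
    Fin n → Fin n → Fin m :=
  fun i j => σ (ω ⬝ᵥ (x i ⊕ᵥ x j))

theorem card_filter_dotProduct_apply_eq (hx : ∀ v, #{i | x i = v} = d)
    (hlam : lam * Fintype.card K = Fintype.card K ^ Fintype.card ι * d)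
    {a : ι → K} (ha : a ≠ 0) (c : K) : #{i | a ⬝ᵥ x i = c} = lam := by
  apply Nat.eq_of_mul_eq_mul_right (Fintype.card_pos (α := K))
  rw [card_filter_comp_eq_mul_of_card_fiber x hx (fun v => a ⬝ᵥ v = c), hlam, mul_right_comm,
    card_filter_dotProduct_eq_mul ha]

theorem linearSquare_isFreqSquare (σ : K ≃ Fin m) (hx : ∀ v, #{i | x i = v} = d)
    (hlam : lam * Fintype.card K = Fintype.card K ^ Fintype.card ι * d)
    {a b : ι → K} (ha : a ≠ 0) (hb : b ≠ 0) :
    IsFreqSquare lam (linearSquare σ x (a ⊕ᵥ b)) := by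
  simp only [IsFreqSquare, linearSquare, sumElim_dotProduct_sumElim, ← Equiv.eq_symm_apply]
  constructor
  · intro i s
    simp_rw [← eq_sub_iff_add_eq']
    exact card_filter_dotProduct_apply_eq hx hlam hb _
  · intro j s
    simp_rw [← eq_sub_iff_add_eq]
    exact card_filter_dotProduct_apply_eq hx hlam ha _

theorem linearSquare_areOrth (σ : K ≃ Fin m) (hx : ∀ v, #{i | x i = v} = d)
    (hlam : lam * Fintype.card K = Fintype.card K ^ Fintype.card ι * d)
    {ω₁ ω₂ : ι ⊕ ι → K} (hω : LinearIndependent K ![ω₁, ω₂]) :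
    AreOrth lam (linearSquare σ x ω₁) (linearSquare σ x ω₂) := by
  intro a b
  have hcount := card_filter_mulVec_eq_mul (A := Matrix.of ![ω₁, ω₂]) hω ![σ.symm a, σ.symm b]
  have hpair := card_filter_comp_eq_mul_of_card_fiber _ (card_fiber_sumElim hx)
    (fun w => Matrix.of ![ω₁, ω₂] *ᵥ w = ![σ.symm a, σ.symm b])
  rw [Fintype.card_fin, Fintype.card_sum, pow_add] at hcount
  simp only [funext_iff, Fin.forall_fin_two, mulVec, of_apply, cons_val_zero,
    cons_val_one] at hpair hcount
  simp only [linearSquare, ← Equiv.eq_symm_apply]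
  rw [hpair]
  apply Nat.eq_of_mul_eq_mul_right (pow_pos (Fintype.card_pos (α := K)) 2)
  linear_combination d ^ 2 * hcount -
    (lam * Fintype.card K + Fintype.card K ^ Fintype.card ι * d) * hlam

theorem dvd_sq_of_forall_areOrth_linearSquare [Nonempty ι] (σ : K ≃ Fin m)
    (hx : ∀ v, #{i | x i = v} = d)
    (hlam : lam * Fintype.card K = Fintype.card K ^ Fintype.card ι * d)
    {G : Fin n → Fin n → Fin m} (hG : IsFreqSquare lam G)
    (horth : ∀ a b : ι → K, a ≠ 0 → b ≠ 0 → AreOrth lam (linearSquare σ x (a ⊕ᵥ b)) G) :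
    Fintype.card K ∣ d ^ 2 := by
  set N : (ι ⊕ ι → K) → ℕ := fun w =>
    #{ij ∈ univ.filter (fun ij : Fin n × Fin n => G ij.1 ij.2 = σ 0) | x ij.1 ⊕ᵥ x ij.2 = w}
  have hyper : ∀ ω : ι ⊕ ι → K, ω ≠ 0 → ∀ c, ∑ w with ω ⬝ᵥ w = c, N w = lam ^ 2 := by
    intro ω hω c
    rw [sum_card_fiberwise_eq_card_filter, filter_filter]
    simp only [mem_filter, mem_univ, true_and]
    obtain ⟨a, b, rfl⟩ : ∃ a b, a ⊕ᵥ b = ω := ⟨_, _, Sum.elim_comp_inl_inr ω⟩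
    simp only [sumElim_dotProduct_sumElim]
    by_cases ha : a = 0 <;> by_cases hb : b = 0
    · simp [ha, hb] at hω
    · simp only [ha, zero_dotProduct, zero_add, and_comm (a := G _ _ = _)]
      exact (hG.card_filter_and_snd (fun j => b ⬝ᵥ x j = c) _).trans
        (by rw [card_filter_dotProduct_apply_eq hx hlam hb, sq])
    · simp only [hb, zero_dotProduct, add_zero, and_comm (a := G _ _ = _)]
      exact (hG.card_filter_and_fst (fun i => a ⬝ᵥ x i = c) _).trans
        (by rw [card_filter_dotProduct_apply_eq hx hlam ha, sq])
    · simpa only [linearSquare, sumElim_dotProduct_sumElim, Equiv.apply_eq_iff_eq, and_comm]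
        using horth a b ha hb (σ c) (σ 0)
  have hzero := apply_zero_mul_pow_eq_of_sum_hyperplane_eq hyper
  rw [Fintype.card_sum, pow_add] at hzero
  refine ⟨N 0, Nat.eq_of_mul_eq_mul_left
    (pow_pos (Fintype.card_pos (α := K)) (2 * Fintype.card ι)) ?_⟩
  symm
  linear_combination Fintype.card K * hzero +
    (lam * Fintype.card K + Fintype.card K ^ Fintype.card ι * d) * hlam

end LinearSquares

section Family

variable {K ι : Type*} [Field K]

noncomputable def familyVec (t : ℙ K (ι → K) × {b : ι → K // b ≠ 0}) : ι ⊕ ι → K :=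
  t.1.rep ⊕ᵥ t.2

theorem linearIndependent_familyVec {s t : ℙ K (ι → K) × {b : ι → K // b ≠ 0}} (hst : s ≠ t) :
    LinearIndependent K ![familyVec s, familyVec t] := by
  have hs : familyVec s ≠ 0 :=
    fun h => s.1.rep_nonzero (by simpa [familyVec] using congrArg (· ∘ Sum.inl) h)
  refine (LinearIndependent.pair_iff' hs).mpr fun c hc => hst ?_
  have h₁ : c • s.1.rep = t.1.rep :=
    funext fun i => by simpa [familyVec] using congrFun hc (.inl i)
  have h₂ : c • (s.2 : ι → K) = t.2 :=
    funext fun i => by simpa [familyVec] using congrFun hc (.inr i)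
  have hP : t.1 = s.1 := by
    rw [← s.1.mk_rep, ← t.1.mk_rep, Projectivization.mk_eq_mk_iff']
    exact ⟨c, h₁⟩
  have hc : c = 1 := smul_left_injective K s.1.rep_nonzero (by simpa [hP] using h₁)
  exact Prod.ext hP.symm (Subtype.ext (by rw [← h₂, hc, one_smul]))

theorem card_projectivization_prod_ne_zero_mul [Fintype K] [DecidableEq K] [Fintype ι]
    [DecidableEq ι] :
    Nat.card (ℙ K (ι → K) × {b : ι → K // b ≠ 0}) * (Fintype.card K - 1)
      = (Fintype.card K ^ Fintype.card ι - 1) ^ 2 := by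
  have hP := Projectivization.card K (ι → K)
  simp only [Nat.card_eq_fintype_card, Fintype.card_fun] at hP ⊢
  rw [Nat.card_prod, mul_right_comm, ← hP]
  simp [sq]

theorem areOrth_linearSquare_of_forall_familyVec [Fintype ι] {n m lam : ℕ} (σ : K ≃ Fin m)
    {x : Fin n → ι → K} {G : Fin n → Fin n → Fin m}
    (h : ∀ t, AreOrth lam (linearSquare σ x (familyVec t)) G)
    {a b : ι → K} (ha : a ≠ 0) (hb : b ≠ 0) : AreOrth lam (linearSquare σ x (a ⊕ᵥ b)) G := by
  obtain ⟨u, hu⟩ := Projectivization.exists_smul_eq_mk_rep K a ha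
  let t : ℙ K (ι → K) × {b : ι → K // b ≠ 0} :=
    (.mk K a ha, ⟨u • b, (smul_ne_zero_iff_ne u).mpr hb⟩)
  have hsq : linearSquare σ x (a ⊕ᵥ b) = fun i j =>
      (σ.symm.trans ((Units.mulLeft u⁻¹).trans σ)) (linearSquare σ x (familyVec t) i j) := by
    funext i j
    simp [linearSquare, familyVec, t, ← hu, sumElim_dotProduct_sumElim, Units.smul_def,
      ← mul_add, u.ne_zero]
  rw [hsq]
  exact (h t).comp_left _

end Family

theorem exists_maximal_mofs_of_not_dvd_sq {K ι : Type*} [Field K] [Fintype K] [DecidableEq K]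
    [Fintype ι] [DecidableEq ι] [Nonempty ι] {n m d lam : ℕ} (σ : K ≃ Fin m) {x : Fin n → ι → K}
    (hx : ∀ v, #{i | x i = v} = d)
    (hlam : lam * Fintype.card K = Fintype.card K ^ Fintype.card ι * d)
    (hd : ¬ Fintype.card K ∣ d ^ 2) :
    ∃ (k : ℕ) (F : Fin k → Fin n → Fin n → Fin m),
      k * (Fintype.card K - 1) = (Fintype.card K ^ Fintype.card ι - 1) ^ 2 ∧
      (∀ t, IsFreqSquare lam (F t)) ∧
      (∀ s t, s ≠ t → AreOrth lam (F s) (F t)) ∧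
      IsMaxFamily lam F := by
  let e := Finite.equivFin (ℙ K (ι → K) × {b : ι → K // b ≠ 0})
  refine ⟨_, fun t => linearSquare σ x (familyVec (e.symm t)),
    card_projectivization_prod_ne_zero_mul,
    fun t => linearSquare_isFreqSquare σ hx hlam (e.symm t).1.rep_nonzero (e.symm t).2.2,
    fun s t hst =>
      linearSquare_areOrth σ hx hlam (linearIndependent_familyVec (e.symm.injective.ne hst)),
    ?_⟩
  rintro ⟨G, hG, horth⟩
  refine hd (dvd_sq_of_forall_areOrth_linearSquare σ hx hlam hG fun a b ha hb => ?_)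
  exact areOrth_linearSquare_of_forall_familyVec σ (fun t => by simpa using horth (e t)) ha hb

theorem not_pow_dvd_sq_div_pow {p u v e n : ℕ} (hp : p.Prime) (hv : p ^ v ∣ n)
    (hv' : ¬ p ^ (v + 1) ∣ n) (he : e ≤ v) (hu : 2 * (v - e) < u) :
    ¬ p ^ u ∣ (n / p ^ e) ^ 2 := by
  obtain ⟨m, rfl⟩ := hv
  have hm : ¬ p ∣ m := fun h => hv' (by rw [pow_succ]; exact mul_dvd_mul_left _ h)
  have hdiv : p ^ v * m / p ^ e = p ^ (v - e) * m := by
    rw [← Nat.sub_add_cancel he, pow_add, Nat.add_sub_cancel, mul_right_comm,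
      Nat.mul_div_cancel _ (pow_pos hp.pos _)]
  rw [hdiv, mul_pow, ← pow_mul]
  intro h
  have hcop : Nat.Coprime (p ^ u) (m ^ 2) := Nat.Coprime.pow _ _ (hp.coprime_iff_not_dvd.mpr hm)
  have := (Nat.pow_dvd_pow_iff_le_right hp.one_lt).mp (hcop.dvd_of_dvd_mul_right h)
  omega

/-- If `q = p^u` is a prime power, `p^v` is the highest power of `p` dividing `n`,
and `0 ≤ v - u*h < u/2` for some `h ≥ 1`, then there is a maximal set of
`(q^h - 1)^2 / (q - 1)` MOFS of type `(n; n/q)`. -/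
theorem stmt4 (p u v h n q : ℕ) (hp : p.Prime) (hq : q = p ^ u) (hu : 0 < u)
    (hh : 1 ≤ h) (hv : p ^ v ∣ n) (hv' : ¬ p ^ (v + 1) ∣ n)
    (h1 : u * h ≤ v) (h2 : 2 * (v - u * h) < u) :
    ∃ (k : ℕ) (F : Fin k → Fin n → Fin n → Fin q),
      k * (q - 1) = (q ^ h - 1) ^ 2 ∧
      (∀ t, IsFreqSquare (n / q) (F t)) ∧
      (∀ s t, s ≠ t → AreOrth (n / q) (F s) (F t)) ∧
      IsMaxFamily (n / q) F := by
  classical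
  have := Fact.mk hp
  let K := GaloisField p u
  let : Fintype K := Fintype.ofFinite K
  have hK : Fintype.card K = q := by
    rw [hq, ← GaloisField.card p u hu.ne', Nat.card_eq_fintype_card]
  have hqh : q ^ h = p ^ (u * h) := by rw [hq, pow_mul]
  have hn : n = q ^ h * (n / q ^ h) :=
    (Nat.mul_div_cancel' (hqh ▸ (pow_dvd_pow p h1).trans hv)).symm
  have hlam : n / q * Fintype.card K = Fintype.card K ^ Fintype.card (Fin h) * (n / q ^ h) := by
    rw [hK, Fintype.card_fin, ← hn]
    exact Nat.div_mul_cancel ((dvd_pow_self q (by omega)).trans (hn ▸ dvd_mul_right _ _))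
  obtain ⟨x, hx⟩ := exists_card_fiber_eq (β := Fin h → K) (by simpa [hK] using hn)
  have : Nonempty (Fin h) := ⟨⟨0, hh⟩⟩
  obtain ⟨k, F, hk, hF⟩ :=
    exists_maximal_mofs_of_not_dvd_sq (Fintype.equivFinOfCardEq hK) hx hlam
    (by rw [hK, hqh, hq]; exact not_pow_dvd_sq_div_pow hp hv hv' h1 h2)
  exact ⟨k, F, by simpa [hK] using hk, hF⟩
end

section
/- For b > 0 and a positive integer m, the convex polytope P(b) = {(x_0,...,x_{2m}) ∈ ℝ^{2m+1} : Σ_i x_i = b, Σ_i i·x_i = mb, x_i ≥ 0} has vertex set V = {v_{i,j} : 0 ≤ i < m < j ≤ 2m} ∪ {b·e_m}, where v_{i,j} = ((j−m)/(j−i))·b·e_i + ((m−i)/(j−i))·b·e_j and e_ℓ denotes the ℓ-th standard basis vector (indexed from 0). -/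
/-- The polytope `P(b) ⊆ ℝ^{2m+1}` of non-negative vectors with coordinate sum `b`
and weighted sum `m·b`. -/
def Pset (m : ℕ) (b : ℝ) : Set (Fin (2 * m + 1) → ℝ) :=
  {x : Fin (2 * m + 1) → ℝ | (∀ i, 0 ≤ x i) ∧ (∑ i, x i) = b ∧ (∑ i : Fin (2 * m + 1), (i.1 : ℝ) * x i) = m * b}

/-- `v` is a vertex of the convex set `P`. -/
def IsVertexOf {E : Type*} [AddCommGroup E] [Module ℝ E] (P : Set E) (v : E) : Prop :=
  v ∈ P ∧ ∀ a : ℝ, 0 < a → a < 1 → ∀ x ∈ P, ∀ y ∈ P,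
    v = a • x + (1 - a) • y → x = v ∧ y = v

/-!
A point `v` of `P(b)` is a vertex exactly when no nonzero direction `d` with `∑ d = 0` and
`∑ i d_i = 0` is supported inside the support of `v`: otherwise `v ± ε d` both lie in `P(b)`.
These are only two linear conditions, so three support points `p, q, r` would give such a
direction, namely `(q - r, r - p, p - q)`. Hence a vertex is supported on one or two
coordinates, and the two equations then pin it down as `b e_m` or as `v_{i,j}`, where
positivity forces `i < m < j`. Conversely each of these points is the only point of `P(b)`
with its support, hence a vertex.
-/

open Finset Filter Topology

lemma IsVertexOf.eq_zero_of_add_mem_of_sub_mem {E : Type*} [AddCommGroup E] [Module ℝ E]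
    {P : Set E} {v d : E} (hv : IsVertexOf P v) (hadd : v + d ∈ P) (hsub : v - d ∈ P) :
    d = 0 := by
  have hmid : v = (1 / 2 : ℝ) • (v + d) + (1 - 1 / 2 : ℝ) • (v - d) := by module
  simpa using (hv.2 (1 / 2) (by norm_num) (by norm_num) _ hadd _ hsub hmid).1

lemma isVertexOf_of_forall_support_subset {ι : Type*} {P : Set (ι → ℝ)} {v : ι → ℝ}
    (hv : v ∈ P) (hP : ∀ x ∈ P, ∀ ℓ, 0 ≤ x ℓ)
    (huniq : ∀ x ∈ P, (∀ ℓ, v ℓ = 0 → x ℓ = 0) → x = v) : IsVertexOf P v := by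
  refine ⟨hv, fun a ha0 ha1 x hx y hy hxy => ?_⟩
  have hsupp : ∀ ℓ, v ℓ = 0 → x ℓ = 0 ∧ y ℓ = 0 := by
    intro ℓ hℓ
    have h := congrFun hxy ℓ
    simp only [hℓ, Pi.add_apply, Pi.smul_apply, smul_eq_mul] at h
    have hx₀ := hP x hx ℓ
    have hy₀ := hP y hy ℓ
    constructor <;> nlinarith
  exact ⟨huniq x hx fun ℓ hℓ => (hsupp ℓ hℓ).1, huniq y hy fun ℓ hℓ => (hsupp ℓ hℓ).2⟩

lemma exists_pos_forall_nonneg_add_mul_and_sub_mul {ι : Type*} [Finite ι] {v d : ι → ℝ}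
    (hv : ∀ ℓ, 0 ≤ v ℓ) (hd : ∀ ℓ, v ℓ = 0 → d ℓ = 0) :
    ∃ ε : ℝ, 0 < ε ∧ ∀ ℓ, 0 ≤ v ℓ + ε * d ℓ ∧ 0 ≤ v ℓ - ε * d ℓ := by
  have hev : ∀ ℓ, ∀ᶠ ε in 𝓝 (0 : ℝ), 0 ≤ v ℓ + ε * d ℓ ∧ 0 ≤ v ℓ - ε * d ℓ := by
    intro ℓ
    rcases (hv ℓ).eq_or_lt with h | h
    · simp [← h, hd ℓ h.symm]
    · have hlim : ∀ c : ℝ, Tendsto (fun ε : ℝ => v ℓ + ε * c) (𝓝 0) (𝓝 (v ℓ)) := fun c => by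
        simpa using ((tendsto_id (x := 𝓝 (0 : ℝ))).mul_const c).const_add (v ℓ)
      filter_upwards [(hlim (d ℓ)).eventually_const_le h, (hlim (-d ℓ)).eventually_const_le h]
        with ε h₁ h₂
      exact ⟨h₁, by linarith⟩
  exact (eventually_all.2 hev).exists_gt

namespace Pset

variable {m : ℕ} {b : ℝ}

noncomputable def edgeVertex (m : ℕ) (b : ℝ) (i j : Fin (2 * m + 1)) :
    Fin (2 * m + 1) → ℝ := fun ℓ =>
  (if ℓ = i then ((j : ℝ) - m) / ((j : ℝ) - i) * b else 0) +
  (if ℓ = j then ((m : ℝ) - i) / ((j : ℝ) - i) * b else 0)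

def centerVertex (m : ℕ) (b : ℝ) : Fin (2 * m + 1) → ℝ := fun ℓ => if (ℓ : ℕ) = m then b else 0

lemma add_smul_mem {x d : Fin (2 * m + 1) → ℝ} (hx : x ∈ Pset m b) (hd₀ : ∑ ℓ, d ℓ = 0)
    (hd₁ : ∑ ℓ : Fin (2 * m + 1), (ℓ : ℝ) * d ℓ = 0) {c : ℝ} (hc : ∀ ℓ, 0 ≤ x ℓ + c * d ℓ) :
    x + c • d ∈ Pset m b := by
  obtain ⟨-, hsum, hwsum⟩ := hx
  refine ⟨hc, ?_, ?_⟩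
  · simp [sum_add_distrib, ← mul_sum, hd₀, hsum]
  · simp only [Pi.add_apply, Pi.smul_apply, smul_eq_mul, mul_add, sum_add_distrib,
      mul_left_comm _ c, ← mul_sum, hd₁, hwsum, mul_zero, add_zero]

lemma eq_zero_of_isVertexOf {v d : Fin (2 * m + 1) → ℝ} (hv : IsVertexOf (Pset m b) v)
    (hd₀ : ∑ ℓ, d ℓ = 0) (hd₁ : ∑ ℓ : Fin (2 * m + 1), (ℓ : ℝ) * d ℓ = 0)
    (hsupp : ∀ ℓ, v ℓ = 0 → d ℓ = 0) : d = 0 := by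
  obtain ⟨ε, hε, hnn⟩ := exists_pos_forall_nonneg_add_mul_and_sub_mul hv.1.1 hsupp
  have hadd := add_smul_mem hv.1 hd₀ hd₁ (c := ε) fun ℓ => (hnn ℓ).1
  have hsub := add_smul_mem hv.1 hd₀ hd₁ (c := -ε) fun ℓ => by simpa using (hnn ℓ).2
  rw [neg_smul, ← sub_eq_add_neg] at hsub
  simpa [hε.ne'] using hv.eq_zero_of_add_mem_of_sub_mem hadd hsub


lemma sums_of_support_pair {x : Fin (2 * m + 1) → ℝ} (hx : x ∈ Pset m b) {i j : Fin (2 * m + 1)}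
    (hij : i ≠ j) (hsupp : ∀ ℓ, ℓ ≠ i → ℓ ≠ j → x ℓ = 0) :
    x i + x j = b ∧ (i : ℝ) * x i + (j : ℝ) * x j = m * b := by
  obtain ⟨-, hsum, hwsum⟩ := hx
  refine ⟨?_, ?_⟩
  · rwa [Fintype.sum_eq_add i j hij fun ℓ hℓ => hsupp ℓ hℓ.1 hℓ.2] at hsum
  · rwa [Fintype.sum_eq_add i j hij fun ℓ hℓ => by rw [hsupp ℓ hℓ.1 hℓ.2, mul_zero]] at hwsum

lemma eq_edgeVertex {x : Fin (2 * m + 1) → ℝ} (hx : x ∈ Pset m b) {i j : Fin (2 * m + 1)}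
    (hij : i ≠ j) (hsupp : ∀ ℓ, ℓ ≠ i → ℓ ≠ j → x ℓ = 0) : x = edgeVertex m b i j := by
  obtain ⟨hsum, hwsum⟩ := sums_of_support_pair hx hij hsupp
  have hji : (j : ℝ) - i ≠ 0 := sub_ne_zero.2 (by exact_mod_cast (Fin.val_injective.ne hij).symm)
  have hxi : x i = ((j : ℝ) - m) / ((j : ℝ) - i) * b := by
    field_simp; linear_combination (j : ℝ) * hsum - hwsum
  have hxj : x j = ((m : ℝ) - i) / ((j : ℝ) - i) * b := by
    field_simp; linear_combination hwsum - (i : ℝ) * hsum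
  funext ℓ
  by_cases hi : ℓ = i
  · subst hi; simp [edgeVertex, hij, hxi]
  by_cases hj : ℓ = j
  · subst hj; simp [edgeVertex, Ne.symm hij, hxj]
  simp [edgeVertex, hi, hj, hsupp ℓ hi hj]

lemma eq_centerVertex {x : Fin (2 * m + 1) → ℝ} (hx : x ∈ Pset m b)
    (hsupp : ∀ ℓ : Fin (2 * m + 1), (ℓ : ℕ) ≠ m → x ℓ = 0) : x = centerVertex m b := by
  obtain ⟨-, hsum, -⟩ := hx
  set c : Fin (2 * m + 1) := ⟨m, by omega⟩
  have hc : ∀ ℓ, ℓ ≠ c → x ℓ = 0 := fun ℓ hℓ => hsupp ℓ fun h => hℓ (Fin.ext h)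
  rw [Fintype.sum_eq_single c hc] at hsum
  funext ℓ
  by_cases hℓ : ℓ = c
  · subst hℓ; simp [centerVertex, c, hsum]
  · simp [centerVertex, hc ℓ hℓ, show (ℓ : ℕ) ≠ m from fun h => hℓ (Fin.ext h)]

lemma edgeVertex_mem (hb : 0 ≤ b) {i j : Fin (2 * m + 1)} (hi : (i : ℕ) < m) (hj : m < (j : ℕ)) :
    edgeVertex m b i j ∈ Pset m b := by
  have him : (i : ℝ) < m := by exact_mod_cast hi
  have hmj : (m : ℝ) < j := by exact_mod_cast hj
  have hji : (j : ℝ) - i ≠ 0 := by linarith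
  refine ⟨fun ℓ => ?_, ?_, ?_⟩
  · have h₁ : 0 ≤ ((j : ℝ) - m) / ((j : ℝ) - i) * b :=
      mul_nonneg (div_nonneg (by linarith) (by linarith)) hb
    have h₂ : 0 ≤ ((m : ℝ) - i) / ((j : ℝ) - i) * b :=
      mul_nonneg (div_nonneg (by linarith) (by linarith)) hb
    unfold edgeVertex; positivity
  · simp only [edgeVertex, sum_add_distrib, sum_ite_eq', mem_univ, if_true]
    field_simp; ring
  · simp only [edgeVertex, mul_add, mul_ite, mul_zero, sum_add_distrib,
      sum_ite_eq', mem_univ, if_true]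
    field_simp; ring

lemma centerVertex_mem (hb : 0 ≤ b) : centerVertex m b ∈ Pset m b := by
  set c : Fin (2 * m + 1) := ⟨m, by omega⟩
  have hcv : centerVertex m b = fun ℓ => if ℓ = c then b else 0 := by
    funext ℓ; simp [centerVertex, c, Fin.ext_iff]
  refine ⟨fun ℓ => by unfold centerVertex; split_ifs <;> simp [hb], ?_, ?_⟩ <;>
    simp [hcv, c]

lemma apply_eq_zero_of_isVertexOf {v : Fin (2 * m + 1) → ℝ} (hv : IsVertexOf (Pset m b) v)
    {p q r : Fin (2 * m + 1)} (hpq : p ≠ q) (hpr : p ≠ r) (hqr : q ≠ r)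
    (hp : v p ≠ 0) (hq : v q ≠ 0) : v r = 0 := by
  by_contra hr
  -- `(q - r, r - p, p - q)` is orthogonal to both `(1, 1, 1)` and `(p, q, r)`.
  set d : Fin (2 * m + 1) → ℝ :=
    Pi.single p ((q : ℝ) - r) + Pi.single q ((r : ℝ) - p) + Pi.single r ((p : ℝ) - q)
  have hd : d = 0 := by
    refine eq_zero_of_isVertexOf hv ?_ ?_ fun ℓ hℓ => ?_
    · simp [d, sum_add_distrib]
    · simp only [d, Pi.add_apply, Pi.single_apply, mul_add, mul_ite, mul_zero, sum_add_distrib,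
        sum_ite_eq', mem_univ, if_true]
      ring
    · simp [d, show ℓ ≠ p from fun h => hp (h ▸ hℓ),
        show ℓ ≠ q from fun h => hq (h ▸ hℓ), show ℓ ≠ r from fun h => hr (h ▸ hℓ)]
  have hdp := congrFun hd p
  simp only [d, Pi.add_apply, Pi.single_eq_same, Pi.single_eq_of_ne hpq, Pi.single_eq_of_ne hpr,
    add_zero, Pi.zero_apply, sub_eq_zero, Nat.cast_inj] at hdp
  exact hqr (Fin.ext hdp)

lemma exists_eq_edgeVertex {x : Fin (2 * m + 1) → ℝ} (hx : x ∈ Pset m b) {i j : Fin (2 * m + 1)}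
    (hij : i ≠ j) (hi : x i ≠ 0) (hj : x j ≠ 0) (hsupp : ∀ ℓ, ℓ ≠ i → ℓ ≠ j → x ℓ = 0) :
    ∃ i j : Fin (2 * m + 1), (i : ℕ) < m ∧ m < (j : ℕ) ∧ x = edgeVertex m b i j := by
  wlog hlt : i < j generalizing i j
  · exact this hij.symm hj hi (fun ℓ h₁ h₂ => hsupp ℓ h₂ h₁) (hij.symm.lt_of_le (not_lt.1 hlt))
  obtain ⟨hsum, hwsum⟩ := sums_of_support_pair hx hij hsupp
  have hxi : 0 < x i := (hx.1 i).lt_of_ne' hi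
  have hxj : 0 < x j := (hx.1 j).lt_of_ne' hj
  have hlt' : (i : ℝ) < j := by exact_mod_cast hlt
  have him : (i : ℝ) < m := by nlinarith [mul_pos (sub_pos.2 hlt') hxj]
  have hmj : (m : ℝ) < j := by nlinarith [mul_pos (sub_pos.2 hlt') hxi]
  exact ⟨i, j, by exact_mod_cast him, by exact_mod_cast hmj, eq_edgeVertex hx hij hsupp⟩

lemma eq_centerVertex_of_support_singleton (hb : b ≠ 0) {x : Fin (2 * m + 1) → ℝ}
    (hx : x ∈ Pset m b) {i : Fin (2 * m + 1)} (hsupp : ∀ ℓ, ℓ ≠ i → x ℓ = 0) :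
    x = centerVertex m b := by
  have hsum := hx.2.1
  have hwsum := hx.2.2
  rw [Fintype.sum_eq_single i hsupp] at hsum
  rw [Fintype.sum_eq_single i fun ℓ hℓ => by rw [hsupp ℓ hℓ, mul_zero], hsum] at hwsum
  have hi : (i : ℕ) = m := by exact_mod_cast mul_right_cancel₀ hb hwsum
  exact eq_centerVertex hx fun ℓ hℓ => hsupp ℓ fun h => hℓ (h ▸ hi)

lemma isVertexOf_cases (hb : b ≠ 0) {v : Fin (2 * m + 1) → ℝ} (hv : IsVertexOf (Pset m b) v) :
    (∃ i j : Fin (2 * m + 1), (i : ℕ) < m ∧ m < (j : ℕ) ∧ v = edgeVertex m b i j) ∨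
      v = centerVertex m b := by
  obtain ⟨i, hi⟩ : ∃ i, v i ≠ 0 := by
    by_contra! h
    exact hb (by simpa [h] using hv.1.2.1.symm)
  by_cases hj : ∃ j, j ≠ i ∧ v j ≠ 0
  · obtain ⟨j, hji, hj⟩ := hj
    refine .inl (exists_eq_edgeVertex hv.1 hji.symm hi hj fun ℓ h₁ h₂ => ?_)
    exact apply_eq_zero_of_isVertexOf hv hji.symm (Ne.symm h₁) (Ne.symm h₂) hi hj
  · push Not at hj
    exact .inr (eq_centerVertex_of_support_singleton hb hv.1 fun ℓ hℓ => hj ℓ hℓ)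

lemma isVertexOf_edgeVertex (hb : 0 ≤ b) {i j : Fin (2 * m + 1)} (hi : (i : ℕ) < m)
    (hj : m < (j : ℕ)) : IsVertexOf (Pset m b) (edgeVertex m b i j) := by
  have hij : i ≠ j := fun h => by omega
  refine isVertexOf_of_forall_support_subset (edgeVertex_mem hb hi hj) (fun x hx => hx.1)
    fun x hx hsupp => eq_edgeVertex hx hij fun ℓ h₁ h₂ => hsupp ℓ ?_
  simp [edgeVertex, h₁, h₂]

lemma isVertexOf_centerVertex (hb : 0 ≤ b) : IsVertexOf (Pset m b) (centerVertex m b) :=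
  isVertexOf_of_forall_support_subset (centerVertex_mem hb) (fun x hx => hx.1)
    fun x hx hsupp => eq_centerVertex hx fun ℓ hℓ => hsupp ℓ (by simp [centerVertex, hℓ])

end Pset

open Pset in
theorem stmt5_general (m : ℕ) (b : ℝ) (hb : 0 < b) :
    {v | IsVertexOf (Pset m b) v} =
      {w | (∃ i j : Fin (2 * m + 1), (i : ℕ) < m ∧ m < (j : ℕ) ∧
              w = fun ℓ =>
                (if ℓ = i then ((j : ℝ) - m) / ((j : ℝ) - i) * b else 0) +
                (if ℓ = j then ((m : ℝ) - i) / ((j : ℝ) - i) * b else 0)) ∨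
            w = fun ℓ : Fin (2 * m + 1) => if (ℓ : ℕ) = m then b else 0} := by
  ext v
  refine ⟨isVertexOf_cases hb.ne', ?_⟩
  rintro (⟨i, j, hi, hj, rfl⟩ | rfl)
  · exact isVertexOf_edgeVertex hb.le hi hj
  · exact isVertexOf_centerVertex hb.le

theorem stmt5 (m : ℕ) (hm : 1 ≤ m) (b : ℝ) (hb : 0 < b) :
    {v | IsVertexOf (Pset m b) v} =
      {w | (∃ i j : Fin (2 * m + 1), (i : ℕ) < m ∧ m < (j : ℕ) ∧
              w = fun ℓ =>
                (if ℓ = i then ((j : ℝ) - m) / ((j : ℝ) - i) * b else 0) +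
                (if ℓ = j then ((m : ℝ) - i) / ((j : ℝ) - i) * b else 0)) ∨
            w = fun ℓ : Fin (2 * m + 1) => if (ℓ : ℕ) = m then b else 0} :=
  stmt5_general m b hb
end

section
/- Let m ≥ 1, let f(1)=2 and f(m)=(2m−2)·lcm(1,...,2m−1) for m ≥ 2, and let β be a positive integer divisible by f(m). Then for any non-negative integers x_0,...,x_{2m} satisfying Σ_{i=0}^{2m} i·x_i = 2mβ and Σ_{i=0}^{2m} x_i = 2β, there exist non-negative integers x_{i,j} (0 ≤ i ≤ 2m, 1 ≤ j ≤ 2β/f(m)) such that Σ_i i·x_{i,j} = m·f(m) and Σ_i x_{i,j} = f(m) for each j, and Σ_j x_{i,j} = x_i for each i. -/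
/-- `f(1) = 2` and `f(m) = (2m−2)·lcm(1,…,2m−1)` for `m ≥ 2`. -/
def fJP (m : ℕ) : ℕ :=
  if m = 1 then 2 else (2 * m - 2) * (Finset.Icc 1 (2 * m - 1)).lcm id

/-!
Read `x` as a multiset of values in `[0, 2m]` with mean `m`, i.e. of deviations `i - m` in
`[-m, m]` summing to zero. Ordering such deviations greedily keeps every partial sum in
`(-m, m]`, so among the first `2m + 1` partial sums two agree: every such multiset splits into
zero-sum blocks of at most `2m` elements.

To cut out a part of exactly `f(m)` elements, blocks of size `t` are taken in groups of total
size `D_t` (`chunkSize m t`), where `D_t = lcm(1..m)` for `t ≤ m`, `D_t = lcm(1..2m-1)` for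
`m < t < 2m` and `D_{2m} = 2 lcm(1..2m-1)`. These form a divisibility chain, so going down from
the largest size any multiple of `D_{2m}` (such as `f(m)`) is attained once the total exceeds it
by the waste `∑ (D_t - t)`. Bertrand's postulate gives `m lcm(1..m) ≤ lcm(1..2m-1)`, which
bounds the waste by `f(m)`; so a part can be cut out of anything of size at least `2 f(m)`, and
the parts are peeled off one at a time.
-/

open Finset

section ZeroSumBlocks

variable {α : Type*} [DecidableEq α] (d : α → ℤ) (m : ℕ)

theorem exists_ordering_partialSums_mem_Ioc (w : Multiset α)
    (hw : ∀ a ∈ w, |d a| ≤ m) (s : ℤ) (hs : s ∈ Set.Ioc (-(m : ℤ)) m)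
    (hsum : s + (w.map d).sum = 0) :
    ∃ l : List α, (l : Multiset α) = w ∧
      ∀ k, s + ((l.take k).map d).sum ∈ Set.Ioc (-(m : ℤ)) m := by
  induction hn : Multiset.card w generalizing w s with
  | zero =>
    obtain rfl := Multiset.card_eq_zero.mp hn
    exact ⟨[], rfl, by simpa using hs⟩
  | succ n ih =>
    have hne : w ≠ ∅ := by rintro rfl; simp at hn
    -- the remaining elements have total `-s`, so one of them has the sign opposite to `s`
    obtain ⟨a, ha, hsa⟩ : ∃ a ∈ w, s + d a ∈ Set.Ioc (-(m : ℤ)) m := by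
      obtain ⟨hs₁, hs₂⟩ := hs
      rcases le_or_gt s 0 with hs0 | hs0
      · obtain ⟨a, ha, hda⟩ : ∃ a ∈ w, 0 ≤ d a := by
          by_contra! hneg
          have := Multiset.sum_lt_sum_of_nonempty hne hneg
          simp only [Multiset.map_const', Multiset.sum_replicate, smul_zero] at this
          omega
        have := abs_le.mp (hw a ha)
        exact ⟨a, ha, by omega, by omega⟩
      · obtain ⟨a, ha, hda⟩ : ∃ a ∈ w, d a < 0 := by
          by_contra! hpos
          have := Multiset.sum_nonneg (s := w.map d) (by simpa using hpos)
          omega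
        have := abs_le.mp (hw a ha)
        exact ⟨a, ha, by omega, by omega⟩
    have herase := Multiset.sum_map_erase (f := d) ha
    obtain ⟨l, hl, hpre⟩ := ih (w.erase a) (fun b hb => hw b (Multiset.mem_of_mem_erase hb))
      (s + d a) hsa (by omega) (by rw [Multiset.card_erase_of_mem ha, hn]; rfl)
    refine ⟨a :: l, by rw [← Multiset.cons_coe, hl, Multiset.cons_erase ha], ?_⟩
    rintro (_ | k)
    · simpa using hs
    · simpa [add_assoc] using hpre k

theorem exists_short_zeroSum_le (hm : 0 < m) (w : Multiset α)
    (hw : ∀ a ∈ w, |d a| ≤ m) (hsum : (w.map d).sum = 0) (hne : w ≠ 0) :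
    ∃ u ≤ w, u ≠ 0 ∧ Multiset.card u ≤ 2 * m ∧ (u.map d).sum = 0 := by
  rcases le_or_gt (Multiset.card w) (2 * m) with hle | hlt
  · exact ⟨w, le_rfl, hne, hle, hsum⟩
  obtain ⟨l, rfl, hpre⟩ :=
    exists_ordering_partialSums_mem_Ioc d m w hw 0 ⟨by omega, by omega⟩ (by simpa using hsum)
  let P : ℕ → ℤ := fun k => ((l.take k).map d).sum
  -- pigeonhole: `2 * m + 1` partial sums in an interval holding `2 * m` integers
  obtain ⟨i, hi, j, hj, hij, hPij⟩ :=
    Finset.exists_ne_map_eq_of_card_lt_of_maps_to (s := Finset.range (2 * m + 1))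
      (t := Finset.Ioc (-(m : ℤ)) m) (f := P) (by rw [Int.card_Ioc, card_range]; omega)
      (fun k _ => by simpa [P] using hpre k)
  obtain ⟨a, b, hab, hb, hPab⟩ : ∃ a b, a < b ∧ b ≤ 2 * m ∧ P a = P b := by
    simp only [Finset.mem_range] at hi hj
    rcases lt_or_gt_of_ne hij with h | h
    · exact ⟨i, j, h, by omega, hPij⟩
    · exact ⟨j, i, h, by omega, hPij.symm⟩
  have hlen : 2 * m < l.length := by simpa using hlt
  have hsplit : P b = P a + (((l.drop a).take (b - a)).map d).sum := by
    simp only [P]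
    rw [← List.sum_append, ← List.map_append, ← List.take_add, Nat.add_sub_cancel' hab.le]
  refine ⟨((l.drop a).take (b - a) : List α), ?_, ?_, ?_, ?_⟩
  · exact Multiset.coe_le.mpr ((List.take_sublist _ _).trans (List.drop_sublist _ _)).subperm
  · simp only [ne_eq, Multiset.coe_eq_zero, List.take_eq_nil_iff, List.drop_eq_nil_iff]
    omega
  · simp only [Multiset.coe_card, List.length_take, List.length_drop]
    omega
  · simp only [Multiset.map_coe, Multiset.sum_coe]
    omega

theorem exists_short_zeroSum_join_eq (hm : 0 < m) (w : Multiset α)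
    (hw : ∀ a ∈ w, |d a| ≤ m) (hsum : (w.map d).sum = 0) :
    ∃ B : Multiset (Multiset α), B.join = w ∧
      ∀ u ∈ B, Multiset.card u ≤ 2 * m ∧ (u.map d).sum = 0 := by
  induction hn : Multiset.card w using Nat.strong_induction_on generalizing w with
  | _ n ih =>
  rcases eq_or_ne w 0 with rfl | hne
  · exact ⟨0, by simp, by simp⟩
  obtain ⟨u, hu, hu0, hucard, husum⟩ := exists_short_zeroSum_le d m hm w hw hsum hne
  obtain ⟨r, rfl⟩ := Multiset.le_iff_exists_add.mp hu
  have hcard : Multiset.card r < n := by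
    rw [← hn, Multiset.card_add]
    have := Multiset.card_pos.mpr hu0
    omega
  obtain ⟨B, hB, hBr⟩ := ih _ hcard r (fun a ha => hw a (Multiset.mem_add.mpr (.inr ha)))
    (by simpa [husum] using hsum) rfl
  refine ⟨u ::ₘ B, by simp [hB], ?_⟩
  simp only [Multiset.mem_cons, forall_eq_or_imp]
  exact ⟨⟨hucard, husum⟩, hBr⟩

end ZeroSumBlocks

theorem Nat.mod_le_sub_of_dvd {t a D : ℕ} (hta : t ∣ a) (htD : t ∣ D) (hD : 0 < D) :
    a % D ≤ D - t := by
  obtain ⟨i, hi⟩ := (Nat.dvd_mod_iff htD).mpr hta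
  obtain ⟨j, rfl⟩ := htD
  have hij : i < j := Nat.lt_of_mul_lt_mul_left (hi ▸ Nat.mod_lt a hD)
  have := Nat.mul_le_mul_left t (Nat.succ_le_of_lt hij)
  rw [Nat.mul_succ] at this
  omega

theorem Multiset.exists_le_card_eq {β : Type*} {s : Multiset β} {k : ℕ} (hk : k ≤ card s) :
    ∃ t ≤ s, card t = k := by
  obtain ⟨t, ht⟩ := Multiset.card_pos_iff_exists_mem.mp
    (by rw [card_powersetCard]; exact Nat.choose_pos hk : 0 < card (powersetCard k s))
  exact ⟨t, mem_powersetCard.mp ht⟩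

theorem exists_le_sum_map_eq_of_dvd_chain {β : Type*} (size : β → ℕ) (D : ℕ → ℕ)
    (n : ℕ) (hdvd : ∀ t ∈ Ioc 0 n, t ∣ D t) (hchain : ∀ t < n, D t ∣ D (t + 1))
    (S : Multiset β) (hS : ∀ b ∈ S, size b ≤ n) (v : ℕ) (hv : D n ∣ v)
    (hle : v + ∑ t ∈ Ioc 0 n, (D t - t) ≤ (S.map size).sum) :
    ∃ T ≤ S, (T.map size).sum = v := by
  induction n generalizing S v with
  | zero =>
    have : (S.map size).sum = 0 := Multiset.sum_eq_zero (by simpa using hS)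
    rw [Ioc_self, sum_empty, this] at hle
    exact ⟨0, Multiset.zero_le _, by rw [Multiset.map_zero, Multiset.sum_zero]; omega⟩
  | succ n ih =>
    set top := S.filter (size · = n + 1)
    set rest := S.filter (fun b => ¬ size b = n + 1)
    have htop : ∀ T ≤ top, (T.map size).sum = Multiset.card T * (n + 1) := fun T hT => by
      have hsize : ∀ b ∈ T, size b = n + 1 := fun b hb =>
        (Multiset.mem_filter.mp (Multiset.mem_of_le hT hb)).2
      rw [Multiset.map_congr rfl hsize, Multiset.map_const', Multiset.sum_replicate, smul_eq_mul]
    have hS_sum : (S.map size).sum = Multiset.card top * (n + 1) + (rest.map size).sum := by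
      rw [← htop top le_rfl, ← Multiset.sum_add, ← Multiset.map_add, Multiset.filter_add_not]
    have hDn : n + 1 ∣ D (n + 1) := hdvd _ (by simp)
    rw [sum_Ioc_succ_top (Nat.zero_le n)] at hle
    set N := Multiset.card top * (n + 1)
    -- the largest multiple of `D (n + 1)` payable with coins of the top size
    set κ := N - N % D (n + 1)
    have hκ : D (n + 1) ∣ κ := Nat.dvd_sub_mod N
    rcases le_or_gt v κ with hvκ | hκv
    · obtain ⟨T, hT, hTcard⟩ := Multiset.exists_le_card_eq (s := top) (k := v / (n + 1))
        (Nat.div_le_of_le_mul (by rw [mul_comm]; omega))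
      exact ⟨T, hT.trans (Multiset.filter_le _ _),
        by rw [htop T hT, hTcard, Nat.div_mul_cancel (hDn.trans hv)]⟩
    · have hD : 0 < D (n + 1) := Nat.pos_of_ne_zero fun h => by
        rw [h, zero_dvd_iff] at hv; omega
      have hmod : N % D (n + 1) ≤ D (n + 1) - (n + 1) :=
        Nat.mod_le_sub_of_dvd (dvd_mul_left _ _) hDn hD
      obtain ⟨T₁, hT₁, hT₁card⟩ :=
        Multiset.exists_le_card_eq (s := top) (k := κ / (n + 1))
          (Nat.div_le_of_le_mul (by rw [mul_comm]; omega))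
      obtain ⟨T₀, hT₀, hT₀sum⟩ :=
        ih (fun t ht => hdvd t (by simp only [mem_Ioc] at ht ⊢; omega))
        (fun t ht => hchain t (by omega)) rest
        (fun b hb => by
          have := Multiset.of_mem_filter hb
          have := hS b (Multiset.mem_of_mem_filter hb)
          omega)
        (v - κ) ((hchain n (by omega)).trans (Nat.dvd_sub hv hκ)) (by omega)
      refine ⟨T₁ + T₀, ?_, ?_⟩
      · rw [← Multiset.filter_add_not (fun b => size b = n + 1) S]
        exact add_le_add hT₁ hT₀
      · rw [Multiset.map_add, Multiset.sum_add, htop T₁ hT₁, hT₁card,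
          Nat.div_mul_cancel (hDn.trans hκ), hT₀sum]
        omega

theorem Nat.dvd_lcmUpto {t n : ℕ} (ht : t ∈ Icc 1 n) : t ∣ Nat.lcmUpto n :=
  Finset.dvd_lcm ht

theorem Nat.lcmUpto_dvd_lcmUpto {k n : ℕ} (h : k ≤ n) : Nat.lcmUpto k ∣ Nat.lcmUpto n :=
  Finset.lcm_mono (Icc_subset_Icc_right h)

theorem Nat.mul_lcmUpto_le_lcmUpto_two_mul_sub_one {m : ℕ} (hm : 2 ≤ m) :
    m * Nat.lcmUpto m ≤ Nat.lcmUpto (2 * m - 1) := by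
  obtain ⟨p, hp, hmp, hp2m⟩ := Nat.exists_prime_lt_and_le_two_mul m (by omega)
  have hp_ne : p ≠ 2 * m := by
    rintro rfl
    rcases hp.eq_one_or_self_of_dvd 2 (dvd_mul_right 2 m) with h | h <;> omega
  have hcop : p.Coprime (Nat.lcmUpto m) := (Nat.Prime.coprime_iff_not_dvd hp).mpr fun h => by
    have := hp.dvd_factorial.mp (h.trans (Nat.lcmUpto_dvd_factorial m))
    omega
  have hdvd : p * Nat.lcmUpto m ∣ Nat.lcmUpto (2 * m - 1) :=
    hcop.mul_dvd_of_dvd_of_dvd (Nat.dvd_lcmUpto (mem_Icc.mpr ⟨by omega, by omega⟩))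
      (Nat.lcmUpto_dvd_lcmUpto (by omega))
  calc m * Nat.lcmUpto m ≤ p * Nat.lcmUpto m := Nat.mul_le_mul_right _ hmp.le
    _ ≤ Nat.lcmUpto (2 * m - 1) := Nat.le_of_dvd (Nat.lcmUpto_pos _) hdvd

theorem fJP_of_ne_one {m : ℕ} (hm : m ≠ 1) :
    fJP m = (2 * m - 2) * Nat.lcmUpto (2 * m - 1) := by
  rw [fJP, if_neg hm, Nat.lcmUpto]

def chunkSize (m t : ℕ) : ℕ :=
  if t = 2 * m then 2 * Nat.lcmUpto (2 * m - 1)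
  else if m < t then Nat.lcmUpto (2 * m - 1) else Nat.lcmUpto m

theorem dvd_chunkSize {m t : ℕ} (ht : t ∈ Ioc 0 (2 * m)) : t ∣ chunkSize m t := by
  simp only [mem_Ioc] at ht
  unfold chunkSize
  split_ifs with h₁ h₂
  · subst h₁
    exact mul_dvd_mul_left 2 (Nat.dvd_lcmUpto (mem_Icc.mpr ⟨by omega, by omega⟩))
  · exact Nat.dvd_lcmUpto (mem_Icc.mpr ⟨by omega, by omega⟩)
  · exact Nat.dvd_lcmUpto (mem_Icc.mpr ⟨by omega, by omega⟩)

theorem chunkSize_dvd_succ {m t : ℕ} (ht : t < 2 * m) :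
    chunkSize m t ∣ chunkSize m (t + 1) := by
  have hL : Nat.lcmUpto m ∣ Nat.lcmUpto (2 * m - 1) := Nat.lcmUpto_dvd_lcmUpto (by omega)
  unfold chunkSize
  split_ifs <;> first
    | omega
    | exact dvd_rfl
    | exact hL
    | exact dvd_mul_left _ _
    | exact hL.mul_left 2

theorem chunkSize_two_mul_dvd_fJP {m : ℕ} (hm : 1 ≤ m) : chunkSize m (2 * m) ∣ fJP m := by
  rcases eq_or_lt_of_le hm with rfl | hm2
  · decide
  · rw [chunkSize, if_pos rfl, fJP_of_ne_one (by omega)]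
    exact mul_dvd_mul_right ⟨m - 1, by omega⟩ _

theorem sum_chunkSize (m : ℕ) (hm : 1 ≤ m) :
    ∑ t ∈ Ioc 0 (2 * m), chunkSize m t =
      m * Nat.lcmUpto m + (m + 1) * Nat.lcmUpto (2 * m - 1) := by
  have h2m : 2 * m = 2 * m - 1 + 1 := by omega
  rw [h2m, sum_Ioc_succ_top (Nat.zero_le _), ← h2m,
    ← sum_Ioc_consecutive _ (Nat.zero_le m) (by omega : m ≤ 2 * m - 1)]
  rw [sum_congr rfl fun t ht => (by
      simp only [mem_Ioc] at ht
      rw [chunkSize, if_neg (by omega), if_neg (by omega)] : chunkSize m t = Nat.lcmUpto m),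
    sum_congr rfl fun t ht => (by
      simp only [mem_Ioc] at ht
      rw [chunkSize, if_neg (by omega), if_pos (by omega)] :
        chunkSize m t = Nat.lcmUpto (2 * m - 1)),
    chunkSize, if_pos rfl]
  simp only [sum_const, Nat.card_Ioc, smul_eq_mul]
  rw [Nat.sub_zero, add_assoc, ← add_mul]
  congr 2
  omega

theorem sum_chunkSize_sub_le_fJP {m : ℕ} (hm : 1 ≤ m) :
    ∑ t ∈ Ioc 0 (2 * m), (chunkSize m t - t) ≤ fJP m := by
  rcases lt_or_ge m 4 with hm4 | hm4
  · interval_cases m <;> decide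
  calc ∑ t ∈ Ioc 0 (2 * m), (chunkSize m t - t)
      ≤ ∑ t ∈ Ioc 0 (2 * m), chunkSize m t := sum_le_sum fun t _ => Nat.sub_le _ _
    _ = m * Nat.lcmUpto m + (m + 1) * Nat.lcmUpto (2 * m - 1) := sum_chunkSize m hm
    _ ≤ (m + 2) * Nat.lcmUpto (2 * m - 1) := by
      have := Nat.mul_lcmUpto_le_lcmUpto_two_mul_sub_one (m := m) (by omega)
      nlinarith
    _ ≤ fJP m := by
      rw [fJP_of_ne_one (by omega)]
      exact Nat.mul_le_mul_right _ (by omega)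

theorem Multiset.sum_map_eq_sum_count {α M : Type*} [Fintype α] [DecidableEq α]
    [AddCommMonoid M] (u : Multiset α) (g : α → M) :
    (u.map g).sum = ∑ a, u.count a • g a := by
  rw [Finset.sum_multiset_map_count]
  exact sum_subset (subset_univ _) fun a _ ha => by
    rw [Multiset.count_eq_zero.mpr (by simpa using ha), zero_smul]

theorem Multiset.sum_map_sub_eq_zero_iff {α : Type*} (u : Multiset α) (g : α → ℕ) (m : ℕ) :
    (u.map fun a => (g a : ℤ) - m).sum = 0 ↔ (u.map g).sum = m * Multiset.card u := by
  have hcast : (u.map fun a => (g a : ℤ)).sum = ((u.map g).sum : ℤ) := by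
    rw [Nat.cast_multiset_sum, Multiset.map_map]; rfl
  rw [Multiset.sum_map_sub, hcast, Multiset.map_const', Multiset.sum_replicate, nsmul_eq_mul,
    sub_eq_zero, mul_comm]
  exact_mod_cast Iff.rfl

section Parts

variable {α : Type*} [DecidableEq α] (d : α → ℤ) {m : ℕ}

theorem exists_le_card_eq_fJP_zeroSum (hm : 1 ≤ m) (w : Multiset α)
    (hw : ∀ a ∈ w, |d a| ≤ m) (hsum : (w.map d).sum = 0)
    (hcard : 2 * fJP m ≤ Multiset.card w) :
    ∃ u ≤ w, Multiset.card u = fJP m ∧ (u.map d).sum = 0 := by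
  obtain ⟨B, rfl, hB⟩ := exists_short_zeroSum_join_eq d m hm w hw hsum
  obtain ⟨T, hT, hTcard⟩ :=
    exists_le_sum_map_eq_of_dvd_chain Multiset.card (chunkSize m) (2 * m)
      (fun t ht => dvd_chunkSize ht) (fun t ht => chunkSize_dvd_succ ht) B
      (fun u hu => (hB u hu).1) (fJP m) (chunkSize_two_mul_dvd_fJP hm)
      (by have := sum_chunkSize_sub_le_fJP hm; rw [← Multiset.card_join]; omega)
  obtain ⟨R, rfl⟩ := Multiset.le_iff_exists_add.mp hT
  refine ⟨T.join, by simp [Multiset.join_add], by rw [Multiset.card_join, hTcard], ?_⟩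
  rw [Multiset.map_join, Multiset.sum_join, Multiset.map_map]
  exact Multiset.sum_eq_zero fun z hz => by
    obtain ⟨u, hu, rfl⟩ := Multiset.mem_map.mp hz
    exact (hB u (Multiset.mem_add.mpr (.inl hu))).2

theorem exists_fin_parts_card_eq_fJP_zeroSum (hm : 1 ≤ m) (K : ℕ) (w : Multiset α)
    (hw : ∀ a ∈ w, |d a| ≤ m) (hsum : (w.map d).sum = 0)
    (hcard : Multiset.card w = K * fJP m) :
    ∃ P : Fin K → Multiset α, ∑ j, P j = w ∧
      ∀ j, Multiset.card (P j) = fJP m ∧ ((P j).map d).sum = 0 := by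
  induction K generalizing w with
  | zero =>
    obtain rfl : w = 0 := Multiset.card_eq_zero.mp (by simpa using hcard)
    exact ⟨Fin.elim0, by simp, fun j => j.elim0⟩
  | succ K ih =>
    rcases Nat.eq_zero_or_pos K with rfl | hK
    · exact ⟨fun _ => w, by simp, fun _ => ⟨by simpa using hcard, hsum⟩⟩
    obtain ⟨u, hu, hucard, husum⟩ := exists_le_card_eq_fJP_zeroSum d hm w hw hsum
      (by rw [hcard]; exact Nat.mul_le_mul_right _ (by omega))
    obtain ⟨r, rfl⟩ := Multiset.le_iff_exists_add.mp hu
    obtain ⟨P, hP, hPj⟩ := ih r (fun a ha => hw a (Multiset.mem_add.mpr (.inr ha)))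
      (by simpa [husum] using hsum)
      (by rw [Multiset.card_add, hucard, add_mul, one_mul] at hcard; omega)
    exact ⟨Fin.cons u P, by simp [Fin.sum_univ_succ, hP], Fin.cases ⟨hucard, husum⟩ hPj⟩

end Parts

theorem stmt7_general (m β : ℕ) (hm : 1 ≤ m) (hdiv : fJP m ∣ β)
    (x : Fin (2 * m + 1) → ℕ)
    (h1 : (∑ i : Fin (2 * m + 1), i.1 * x i) = 2 * m * β)
    (h2 : (∑ i, x i) = 2 * β) :
    ∃ y : Fin (2 * m + 1) → Fin (2 * β / fJP m) → ℕ,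
      (∀ j, (∑ i : Fin (2 * m + 1), i.1 * y i j) = m * fJP m) ∧
      (∀ j, (∑ i, y i j) = fJP m) ∧
      (∀ i, (∑ j, y i j) = x i) := by
  set w : Multiset (Fin (2 * m + 1)) := ∑ i, Multiset.replicate (x i) i
  have hcount : ∀ i, w.count i = x i := fun i => by
    simp [w, Multiset.count_sum', Multiset.count_replicate]
  have hweight : ∀ u : Multiset (Fin (2 * m + 1)),
      ∑ i : Fin (2 * m + 1), i.1 * u.count i = (u.map Fin.val).sum := fun u => by
    simp [Multiset.sum_map_eq_sum_count, mul_comm]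
  have hcard : Multiset.card w = 2 * β := by
    rw [← Multiset.sum_count_eq_card (s := univ) fun a _ => mem_univ a]; simpa [hcount] using h2
  have hmean : (w.map Fin.val).sum = m * Multiset.card w := by
    rw [← hweight, hcard]
    simp only [hcount, h1]
    ring
  obtain ⟨P, hP, hPj⟩ := exists_fin_parts_card_eq_fJP_zeroSum
    (fun i : Fin (2 * m + 1) => (i : ℤ) - m) hm (2 * β / fJP m) w
    (fun i _ => abs_le.mpr ⟨by omega, by have := i.isLt; omega⟩)
    ((Multiset.sum_map_sub_eq_zero_iff w Fin.val m).mpr hmean)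
    (by rw [hcard, Nat.div_mul_cancel (dvd_mul_of_dvd_right hdiv 2)])
  refine ⟨fun i j => (P j).count i, fun j => ?_, fun j => ?_, fun i => ?_⟩
  · rw [hweight, (Multiset.sum_map_sub_eq_zero_iff _ _ _).mp (hPj j).2, (hPj j).1]
  · rw [Multiset.sum_count_eq_card fun a _ => mem_univ a, (hPj j).1]
  · rw [← Multiset.count_sum', hP, hcount]

theorem stmt7 (m β : ℕ) (hm : 1 ≤ m) (hβ : 0 < β) (hdiv : fJP m ∣ β)
    (x : Fin (2 * m + 1) → ℕ)
    (h1 : (∑ i : Fin (2 * m + 1), i.1 * x i) = 2 * m * β)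
    (h2 : (∑ i, x i) = 2 * β) :
    ∃ y : Fin (2 * m + 1) → Fin (2 * β / fJP m) → ℕ,
      (∀ j, (∑ i : Fin (2 * m + 1), i.1 * y i j) = m * fJP m) ∧
      (∀ j, (∑ i, y i j) = fJP m) ∧
      (∀ i, (∑ j, y i j) = x i) :=
  stmt7_general m β hm hdiv x h1 h2
end

section
/- Let F_1, F_2 be binary frequency squares of order n ≡ 0 (mod 4). Let r, r' be two distinct rows of F_1⊕F_2, and suppose there exist two distinct columns c, c' such that F_1[r,c]=F_1[r',c], F_2[r,c]=F_2[r',c], F_1[r,c']=F_1[r',c'], and F_2[r,c']=F_2[r',c']. Then the pair {r,r'} is balanceable: there exists a 2×n binary matrix F with n/2 zeros and n/2 ones in each row and one 0 and one 1 in each column, orthogonal to both F_1(r,r') and F_2(r,r'). -/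
/-- A binary frequency square of order `n`: each symbol occurs `m` times in every
row and column. -/
def IsBinFS {n : ℕ} (m : ℕ) (F : Fin n → Fin n → Fin 2) : Prop :=
  (∀ i : Fin n, ∀ s : Fin 2, (Finset.univ.filter fun j => F i j = s).card = m) ∧
  (∀ j : Fin n, ∀ s : Fin 2, (Finset.univ.filter fun i => F i j = s).card = m)

/-- Two `2 × n` binary arrays are orthogonal: each ordered pair occurs `n/2` times. -/
def OrthRows (n : ℕ) (G H : Fin 2 → Fin n → Fin 2) : Prop :=
  ∀ a b : Fin 2,
    (Finset.univ.filter fun x : Fin 2 × Fin n => G x.1 x.2 = a ∧ H x.1 x.2 = b).card = n / 2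

/-!
For the column `d` put `w d = (F₁[r,d] - F₁[r',d], F₂[r,d] - F₂[r',d]) ∈ {-1,0,1}²`. If `S` is a
set of `n/2` columns with `∑_{d ∈ S} w d = 0`, then the array whose first row is `0` exactly on `S`
and whose second row is the complement of the first is orthogonal to both `F₁(r,r')` and
`F₂(r,r')`. Such an `S` exists: the `w d` sum to zero over all columns, and `w c = w c' = 0`. Up to
the symmetries of the square `{-1,0,1}²`, a zero-sum multiset of such vectors splits into antipodal
pairs, triples `{(1,1), (-1,0), (0,-1)}`, quadruples `{(1,1), (1,-1), (-1,0), (-1,0)}` and zero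
vectors. Taking as many quadruples as fit into `n/2`, then triples, then pairs, leaves a remainder of
at most `2` because `n/2` is even, and the (at least two) zero vectors fill it.
-/

open Finset

namespace Multiset

variable {α β : Type*}

theorem exists_le_card_eq_s14 {s : Multiset α} {n : ℕ} (h : n ≤ card s) : ∃ t ≤ s, card t = n := by
  obtain ⟨t, ht⟩ := card_pos_iff_exists_mem.1 <| by
    rw [card_powersetCard]; exact Nat.choose_pos h
  exact ⟨t, mem_powersetCard.1 ht⟩

theorem exists_le_map_eq (f : α → β) {s : Multiset α} {u : Multiset β} (h : u ≤ s.map f) :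
    ∃ t ≤ s, t.map f = u := by
  induction s using Multiset.induction_on generalizing u with
  | empty => exact ⟨0, le_rfl, (le_zero.1 h).symm⟩
  | cons a s ih =>
    rw [map_cons] at h
    by_cases ha : f a ∈ u
    · obtain ⟨u, rfl⟩ := exists_cons_of_mem ha
      obtain ⟨t, hts, rfl⟩ := ih ((cons_le_cons_iff _).1 h)
      exact ⟨a ::ₘ t, cons_le_cons a hts, map_cons f a t⟩
    · obtain ⟨t, hts, rfl⟩ := ih ((le_cons_of_notMem ha).1 h)
      exact ⟨t, hts.trans (le_cons_self s a), rfl⟩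

theorem sum_count_nsmul_singleton_of_toFinset_subset [DecidableEq α] {m : Multiset α}
    {s : Finset α} (h : m.toFinset ⊆ s) : ∑ v ∈ s, count v m • ({v} : Multiset α) = m := by
  rw [← Finset.sum_subset h fun v _ hv => by rw [count_eq_zero.2 (by simpa using hv), zero_nsmul],
    toFinset_sum_count_nsmul_eq]

theorem count_map_addEquiv {G H : Type*} [AddCommMonoid G] [AddCommMonoid H] [DecidableEq G]
    [DecidableEq H] (φ : G ≃+ H) (m : Multiset G) (v : H) :
    count v (m.map φ) = count (φ.symm v) m := by
  simpa using count_map_eq_count' φ m φ.injective (φ.symm v)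

def HasZeroSumHalf {G : Type*} [AddCommMonoid G] (m : Multiset G) : Prop :=
  ∃ m' ≤ m, m'.sum = 0 ∧ card m' = card m / 2

theorem HasZeroSumHalf.of_map {G H : Type*} [AddCommMonoid G] [AddCommMonoid H] (φ : G ≃+ H)
    {m : Multiset G} (h : (m.map φ).HasZeroSumHalf) : m.HasZeroSumHalf := by
  obtain ⟨m', hm', hsum, hcard⟩ := h
  refine ⟨m'.map φ.symm, ?_, ?_, ?_⟩
  · simpa [map_map] using map_le_map (f := φ.symm) hm'
  · rw [← map_multiset_sum, hsum, _root_.map_zero]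
  · simpa using hcard

end Multiset

namespace SignVector

open Multiset

def triple : Multiset (ℤ × ℤ) := {(1, 1), (-1, 0), (0, -1)}

def quad : Multiset (ℤ × ℤ) := {(1, 1), (1, -1), (-1, 0), (-1, 0)}

def blocks (P : Multiset (ℤ × ℤ)) (τ κ a : ℕ) : Multiset (ℤ × ℤ) :=
  P + P.map Neg.neg + τ • triple + κ • quad + a • {0}

theorem sum_blocks (P : Multiset (ℤ × ℤ)) (τ κ a : ℕ) : (blocks P τ κ a).sum = 0 := by
  simp [blocks, triple, quad, sum_map_neg', Multiset.sum_nsmul]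

theorem card_blocks (P : Multiset (ℤ × ℤ)) (τ κ a : ℕ) :
    card (blocks P τ κ a) = 2 * card P + 3 * τ + 4 * κ + a := by
  simp [blocks, triple, quad]; ring

theorem blocks_mono {P P' : Multiset (ℤ × ℤ)} {τ τ' κ κ' a a' : ℕ} (hP : P' ≤ P) (hτ : τ' ≤ τ)
    (hκ : κ' ≤ κ) (ha : a' ≤ a) : blocks P' τ' κ' a' ≤ blocks P τ κ a := by
  unfold blocks
  gcongr

/-- Greedy choice: as many quadruples as fit into `n / 2`, then triples, then pairs; since `n / 2`
is even, what is left is at most `2 ≤ a`. -/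
theorem exists_block_counts {K T Q a n : ℕ} (htot : 2 * K + 3 * T + 4 * Q + a = n)
    (h4 : 4 ∣ n) (ha : 2 ≤ a) :
    ∃ p ≤ K, ∃ τ ≤ T, ∃ κ ≤ Q, ∃ a₀ ≤ a, 2 * p + 3 * τ + 4 * κ + a₀ = n / 2 := by
  set κ := min Q (n / 2 / 4)
  set τ := min T ((n / 2 - 4 * κ) / 3)
  set p := min K ((n / 2 - 4 * κ - 3 * τ) / 2)
  exact ⟨p, by omega, τ, by omega, κ, by omega, n / 2 - (2 * p + 3 * τ + 4 * κ), by omega, by omega⟩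

theorem hasZeroSumHalf_blocks (P : Multiset (ℤ × ℤ)) (τ κ a : ℕ)
    (h4 : 4 ∣ card (blocks P τ κ a)) (ha : 2 ≤ a) : (blocks P τ κ a).HasZeroSumHalf := by
  rw [card_blocks] at h4
  obtain ⟨p, hp, τ', hτ, κ', hκ, a', ha', hcard⟩ := exists_block_counts rfl h4 ha
  obtain ⟨P', hP', rfl⟩ := exists_le_card_eq_s14 hp
  refine ⟨blocks P' τ' κ' a', blocks_mono hP' hτ hκ ha', sum_blocks .., ?_⟩
  rw [card_blocks, card_blocks, hcard]

theorem exists_eq_blocks {m : Multiset (ℤ × ℤ)} (hm : ∀ v ∈ m, |v.1| ≤ 1 ∧ |v.2| ≤ 1)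
    (hsum : m.sum = 0) (h₂ : count (-1, 1) m ≤ count (1, -1) m)
    (h₃ : count (1, -1) m + count (-1, -1) m ≤ count (1, 1) m + count (-1, 1) m) :
    ∃ P τ κ, m = blocks P τ κ (count 0 m) := by
  have hbox : m.toFinset ⊆ Finset.Icc (-1) 1 ×ˢ Finset.Icc (-1) 1 := fun v hv => by
    simpa [abs_le] using hm v (mem_toFinset.1 hv)
  have hm := sum_count_nsmul_singleton_of_toFinset_subset hbox
  simp only [show Finset.Icc (-1 : ℤ) 1 = {-1, 0, 1} from rfl, Finset.sum_product, Int.reduceNeg,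
    mem_insert, neg_eq_zero, one_ne_zero, Finset.mem_singleton, reduceCtorEq, or_self,
    not_false_eq_true, sum_insert, zero_ne_one, Finset.sum_singleton] at hm
  rw [← hm] at hsum
  simp only [Int.reduceNeg, sum_add, Multiset.sum_nsmul, Multiset.sum_singleton, Prod.smul_mk, Int.nsmul_eq_mul,
    mul_neg, mul_one, nsmul_zero, Prod.mk_add_mk, zero_add, add_zero, Prod.ext_iff, Prod.fst_zero,
    Prod.snd_zero] at hsum
  obtain ⟨d, hd⟩ := Nat.exists_eq_add_of_le h₂
  obtain ⟨t, ht⟩ : ∃ t, count (1, 1) m = count (-1, -1) m + d + t :=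
    ⟨count (1, 1) m - count (-1, -1) m - d, by omega⟩
  have hbm : count (-1, 0) m = count (1, 0) m + 2 * d + t := by omega
  have hcm : count (0, -1) m = count (0, 1) m + t := by omega
  refine ⟨count (1, 0) m • {(1, 0)} + count (0, 1) m • {(0, 1)} + count (-1, -1) m • {(1, 1)} +
    count (-1, 1) m • {(1, -1)}, t, d, ?_⟩
  conv_lhs => rw [← hm, hbm, hcm, hd, ht, Prod.mk_zero_zero]
  simp only [Int.reduceNeg, blocks, Multiset.map_add, Multiset.map_nsmul, Multiset.map_singleton, Prod.neg_mk, neg_zero,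
    neg_neg, triple, insert_eq_cons, ← Multiset.singleton_add, smul_add, quad]
  module

@[simps]
def negSnd : ℤ × ℤ ≃+ ℤ × ℤ where
  toFun v := (v.1, -v.2)
  invFun v := (v.1, -v.2)
  left_inv v := by simp
  right_inv v := by simp
  map_add' v w := by simp [add_comm]

theorem hasZeroSumHalf_of_abs_le_one {m : Multiset (ℤ × ℤ)}
    (hm : ∀ v ∈ m, |v.1| ≤ 1 ∧ |v.2| ≤ 1) (hsum : m.sum = 0) (h4 : 4 ∣ card m)
    (h0 : 2 ≤ count 0 m) : m.HasZeroSumHalf := by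
  -- With `d₁`, `d₂` the excesses of `(1,1)` over `(-1,-1)` and of `(1,-1)` over `(-1,1)`, the
  -- three symmetries act by `(-d₁, -d₂)`, `(d₁, -d₂)` and `(d₂, d₁)`, reaching `0 ≤ d₂ ≤ d₁`.
  wlog h₁ : count (-1, -1) m ≤ count (1, 1) m generalizing m with H
  · refine .of_map (AddEquiv.neg _) (H ?_ ?_ ?_ ?_ ?_)
    · exact forall_mem_map_iff.2 fun v hv => by simpa using hm v hv
    · rw [← map_multiset_sum, hsum, _root_.map_zero]
    · simpa using h4
    all_goals
      simp only [count_map_addEquiv]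
      simp only [AddEquiv.neg_symm, AddEquiv.neg_apply, Prod.neg_mk, neg_neg, neg_zero]
      omega
  wlog h₂ : count (-1, 1) m ≤ count (1, -1) m generalizing m with H
  · refine .of_map AddEquiv.prodComm (H ?_ ?_ ?_ ?_ ?_ ?_)
    · exact forall_mem_map_iff.2 fun v hv => (hm v hv).symm
    · rw [← map_multiset_sum, hsum, _root_.map_zero]
    · simpa using h4
    all_goals
      simp only [count_map_addEquiv]
      simp only [AddEquiv.coe_prodComm_symm, Prod.swap_prod_mk, Prod.swap_zero]
      omega
  wlog h₃ : count (1, -1) m + count (-1, -1) m ≤ count (1, 1) m + count (-1, 1) m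
    generalizing m with H
  · refine .of_map negSnd (H ?_ ?_ ?_ ?_ ?_ ?_ ?_)
    · exact forall_mem_map_iff.2 fun v hv => by simpa using hm v hv
    · rw [← map_multiset_sum, hsum, _root_.map_zero]
    · simpa using h4
    all_goals
      simp only [count_map_addEquiv]
      simp only [negSnd_symm_apply, Prod.fst_zero, Prod.snd_zero, neg_zero, neg_neg]
      omega
  obtain ⟨P, τ, κ, hP⟩ := exists_eq_blocks hm hsum h₂ h₃
  rw [hP] at h4 ⊢
  exact hasZeroSumHalf_blocks P τ κ _ h4 h0

end SignVector

theorem Finset.exists_card_eq_half_sum_eq_zero {ι : Type*} [Fintype ι] (w : ι → ℤ × ℤ)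
    (hw : ∀ i, |(w i).1| ≤ 1 ∧ |(w i).2| ≤ 1) (hsum : ∑ i, w i = 0)
    (h4 : 4 ∣ Fintype.card ι) {i j : ι} (hij : i ≠ j) (hi : w i = 0) (hj : w j = 0) :
    ∃ S : Finset ι, #S = Fintype.card ι / 2 ∧ ∑ d ∈ S, w d = 0 := by
  classical
  have h0 : 2 ≤ (univ.val.map w).count 0 := by
    rw [Multiset.count_map, ← card_pair hij]
    exact card_le_card (s := {i, j}) (t := {d | 0 = w d}) (by simp [insert_subset_iff, hi, hj])
  obtain ⟨m', hm', hsum', hcard⟩ := SignVector.hasZeroSumHalf_of_abs_le_one (by simpa using hw)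
    (by simpa using hsum) (by simpa using h4) h0
  obtain ⟨t, ht, rfl⟩ := Multiset.exists_le_map_eq w hm'
  exact ⟨⟨t, Multiset.nodup_of_le ht univ.nodup⟩, by simpa using hcard, hsum'⟩

section BinaryRows

variable {α : Type*}

def rowDiff (u v : α → Fin 2) (d : α) : ℤ := (u d : ℕ) - (v d : ℕ)

theorem abs_rowDiff_le_one (u v : α → Fin 2) (d : α) : |rowDiff u v d| ≤ 1 := by
  have := (u d).isLt
  have := (v d).isLt
  rw [rowDiff, abs_le]
  omega

theorem sum_rowDiff_eq_card_sub_card (s : Finset α) (u v : α → Fin 2) :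
    ∑ d ∈ s, rowDiff u v d = #{d ∈ s | u d = 1} - #{d ∈ s | v d = 1} := by
  have hval (f : α → Fin 2) : ∑ d ∈ s, ((f d : ℕ) : ℤ) = #{d ∈ s | f d = 1} := by
    rw [natCast_card_filter]
    refine sum_congr rfl fun d _ => ?_
    generalize f d = x
    fin_cases x <;> rfl
  rw [← hval, ← hval, ← sum_sub_distrib]
  rfl

theorem card_filter_eq_of_sum_rowDiff_eq_zero {s : Finset α} {u v : α → Fin 2}
    (h : ∑ d ∈ s, rowDiff u v d = 0) (a : Fin 2) : #{d ∈ s | u d = a} = #{d ∈ s | v d = a} := by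
  rw [sum_rowDiff_eq_card_sub_card, sub_eq_zero] at h
  revert a
  refine Fin.forall_fin_two.2 ⟨?_, Nat.cast_injective h⟩
  have hu := card_filter_add_card_filter_not (s := s) fun d => u d = 1
  have hv := card_filter_add_card_filter_not (s := s) fun d => v d = 1
  have hne : ∀ x : Fin 2, x ≠ 1 ↔ x = 0 := by decide
  simp only [hne] at hu hv
  omega

theorem card_filter_fin_two_prod [Fintype α] (p : Fin 2 → α → Prop)
    [∀ i d, Decidable (p i d)] : #{x : Fin 2 × α | p x.1 x.2} = #{d | p 0 d} + #{d | p 1 d} := by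
  simp only [card_filter, Fintype.sum_prod_type, Fin.sum_univ_two]

variable [DecidableEq α]

def complementRows (S : Finset α) : Fin 2 → α → Fin 2 :=
  fun i d => if i = 0 then (if d ∈ S then 0 else 1) else (if d ∈ S then 1 else 0)

theorem complementRows_zero_ne_one (S : Finset α) (d : α) :
    complementRows S 0 d ≠ complementRows S 1 d := by
  by_cases h : d ∈ S <;> simp [complementRows, h]

theorem card_filter_complementRows {n : ℕ} (hn : 2 ∣ n) {S : Finset (Fin n)} (hS : #S = n / 2)
    (i s : Fin 2) : #{d | complementRows S i d = s} = n / 2 := by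
  have hSc : #{d | d ∉ S} = n / 2 := by
    simp [filter_not, card_univ_sdiff]
    omega
  fin_cases i <;> fin_cases s <;> simp [complementRows, hS, hSc]

theorem orthRows_complementRows {n : ℕ} {u v : Fin n → Fin 2} (hu : ∀ a, #{d | u d = a} = n / 2)
    (hv : ∀ a, #{d | v d = a} = n / 2) {S : Finset (Fin n)}
    (hS : ∀ a, #{d ∈ S | u d = a} = #{d ∈ S | v d = a}) :
    OrthRows n (fun i d => if i = 0 then u d else v d) (complementRows S) := by
  intro a b
  refine (card_filter_fin_two_prod fun i d =>
    (if i = 0 then u d else v d) = a ∧ complementRows S i d = b).trans ?_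
  have hsplit (f : Fin n → Fin 2) :
      #{d | f d = a ∧ d ∈ S} + #{d | f d = a ∧ d ∉ S} = #{d | f d = a} := by
    rw [← filter_filter, ← filter_filter]
    exact card_filter_add_card_filter_not _
  have hmem (f : Fin n → Fin 2) : #{d | f d = a ∧ d ∈ S} = #{d ∈ S | f d = a} := by
    congr 1; ext; simp [and_comm]
  fin_cases b <;> simp [complementRows] <;>
    linarith [hsplit u, hsplit v, hmem u, hmem v, hS a, hu a, hv a]

end BinaryRows

theorem stmt14_general (n : ℕ) (hn : 4 ∣ n)
    (F₁ F₂ : Fin n → Fin n → Fin 2) (h₁ : IsBinFS (n / 2) F₁) (h₂ : IsBinFS (n / 2) F₂)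
    (r r' : Fin n) (c c' : Fin n) (hcc : c ≠ c')
    (e₁ : F₁ r c = F₁ r' c) (e₂ : F₂ r c = F₂ r' c)
    (e₃ : F₁ r c' = F₁ r' c') (e₄ : F₂ r c' = F₂ r' c') :
    ∃ F : Fin 2 → Fin n → Fin 2,
      (∀ i : Fin 2, ∀ s : Fin 2, (Finset.univ.filter fun d => F i d = s).card = n / 2) ∧
      (∀ d, F 0 d ≠ F 1 d) ∧
      OrthRows n (fun i d => if i = 0 then F₁ r d else F₁ r' d) F ∧
      OrthRows n (fun i d => if i = 0 then F₂ r d else F₂ r' d) F := by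
  obtain ⟨S, hS, hSsum⟩ := Finset.exists_card_eq_half_sum_eq_zero
    (fun d => (rowDiff (F₁ r) (F₁ r') d, rowDiff (F₂ r) (F₂ r') d))
    (fun d => ⟨abs_rowDiff_le_one _ _ d, abs_rowDiff_le_one _ _ d⟩)
    (by simp [Prod.ext_iff, Prod.fst_sum, Prod.snd_sum, sum_rowDiff_eq_card_sub_card, h₁.1 r,
      h₁.1 r', h₂.1 r, h₂.1 r'])
    (by simpa using hn) hcc (by simp [rowDiff, e₁, e₂]) (by simp [rowDiff, e₃, e₄])
  simp only [Fintype.card_fin, Prod.ext_iff, Prod.fst_sum, Prod.snd_sum] at hS hSsum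
  exact ⟨complementRows S, card_filter_complementRows (dvd_trans ⟨2, rfl⟩ hn) hS,
    complementRows_zero_ne_one S,
    orthRows_complementRows (h₁.1 r) (h₁.1 r') (card_filter_eq_of_sum_rowDiff_eq_zero hSsum.1),
    orthRows_complementRows (h₂.1 r) (h₂.1 r') (card_filter_eq_of_sum_rowDiff_eq_zero hSsum.2)⟩

theorem stmt14 (n : ℕ) (hn : 4 ∣ n)
    (F₁ F₂ : Fin n → Fin n → Fin 2) (h₁ : IsBinFS (n / 2) F₁) (h₂ : IsBinFS (n / 2) F₂)
    (r r' : Fin n) (hrr : r ≠ r') (c c' : Fin n) (hcc : c ≠ c')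
    (e₁ : F₁ r c = F₁ r' c) (e₂ : F₂ r c = F₂ r' c)
    (e₃ : F₁ r c' = F₁ r' c') (e₄ : F₂ r c' = F₂ r' c') :
    ∃ F : Fin 2 → Fin n → Fin 2,
      (∀ i : Fin 2, ∀ s : Fin 2, (Finset.univ.filter fun d => F i d = s).card = n / 2) ∧
      (∀ d, F 0 d ≠ F 1 d) ∧
      OrthRows n (fun i d => if i = 0 then F₁ r d else F₁ r' d) F ∧
      OrthRows n (fun i d => if i = 0 then F₂ r d else F₂ r' d) F :=
  stmt14_general n hn F₁ F₂ h₁ h₂ r r' c c' hcc e₁ e₂ e₃ e₄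
end

section
/- Let n ≡ 0 (mod 24) and let F_1 and F_2 be any two binary frequency squares of order n (not necessarily orthogonal). Then there exists a binary frequency square F of order n orthogonal to both F_1 and F_2. -/
set_option maxHeartbeats 1600000

/-- Orthogonality of two binary frequency squares of order `n`: every ordered pair
of symbols occurs `n²/4` times upon superimposition. -/
def OrthBin {n : ℕ} (F G : Fin n → Fin n → Fin 2) : Prop :=
  ∀ a b : Fin 2,
    (Finset.univ.filter fun x : Fin n × Fin n => F x.1 x.2 = a ∧ G x.1 x.2 = b).card =
      n ^ 2 / 4


/-- Subset-sum lemma for block sizes 1,2,3,4. -/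
lemma subsetSum (m1 m2 m3 m4 H : ℕ) (hsum : m1 + 2*m2 + 3*m3 + 4*m4 = 2*H)
    (hH : 12 ∣ H) :
    ∃ x1 x2 x3 x4 : ℕ, x1 ≤ m1 ∧ x2 ≤ m2 ∧ x3 ≤ m3 ∧ x4 ≤ m4 ∧
      x1 + 2*x2 + 3*x3 + 4*x4 = H := by
  obtain ⟨k, hk⟩ := hH
  rcases Nat.eq_zero_or_pos H with h0 | hpos
  · exact ⟨0, 0, 0, 0, by omega, by omega, by omega, by omega, by omega⟩
  have hk1 : 1 ≤ k := by omega
  by_cases hcap : m1 + 2*m2 ≥ H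
  · exact ⟨H - 2 * min m2 (H/2), min m2 (H/2), 0, 0, by omega, by omega, by omega,
      by omega, by omega⟩
  by_cases h4 : 4*m4 ≥ H
  · exact ⟨0, 0, 0, H/4, by omega, by omega, by omega, by omega, by omega⟩
  -- now R = H - 4*m4 > 0, even
  have hg : (H - 4*m4) % 6 = 0 ∨ (H - 4*m4) % 6 = 2 ∨ (H - 4*m4) % 6 = 4 := by omega
  -- margin fact: 3*m3 ≥ (H - 4*m4) + c for needed c ≤ 8 as long as it matters
  rcases hg with hg | hg | hg
  · -- d = 0, r = 0
    exact ⟨0, 0, (H - 4*m4)/3, m4, by omega, by omega, by omega, by omega, by omega⟩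
  · by_cases hc : m2 ≥ 1 ∨ m1 ≥ 2
    · -- d = 0, r = 2
      exact ⟨2 - 2 * min m2 1, min m2 1, (H - 4*m4 - 2)/3, m4,
        by omega, by omega, by omega, by omega, by omega⟩
    · -- d = 1, r = 0
      exact ⟨0, 0, (H - 4*m4 + 4)/3, m4 - 1, by omega, by omega, by omega, by omega, by omega⟩
  · by_cases hc1 : m1 ≥ 1
    · -- d = 0, r = 1
      exact ⟨1, 0, (H - 4*m4 - 1)/3, m4, by omega, by omega, by omega, by omega, by omega⟩
    by_cases hc2 : m2 ≥ 2
    · -- d = 0, r = 4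
      exact ⟨0, 2, (H - 4*m4 - 4)/3, m4, by omega, by omega, by omega, by omega, by omega⟩
    by_cases hc3 : m2 = 1
    · -- d = 1, r = 2
      exact ⟨0, 1, (H - 4*m4 + 4 - 2)/3, m4 - 1, by omega, by omega, by omega, by omega, by omega⟩
    · -- d = 2, r = 0
      exact ⟨0, 0, (H - 4*m4 + 8)/3, m4 - 2, by omega, by omega, by omega, by omega, by omega⟩


lemma decomp (p q r u z v w x y : ℕ)
    (h1 : p+q+r = w+x+y) (h2 : p+u+w = r+v+y) :
    ∃ c1 c2 c3 c4 c5 c6 c7 c8 c9 c10 c11 c12 c13 : ℕ,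
      p = c2 + c8 + c10 + c11 ∧
      q = c3 + c6 + c9 + 2*c13 ∧
      r = c4 + c7 + c11 + c12 ∧
      u = c5 + c7 + c9 + 2*c12 ∧
      z = c1 ∧
      v = c5 + c6 + c8 + 2*c10 ∧
      w = c4 + c6 + c10 + c13 ∧
      x = c3 + c7 + c8 + 2*c11 ∧
      y = c2 + c9 + c12 + c13 := by
  by_cases hP : 0 < p - min p y
  · by_cases hQ : 0 < q - min q x
    · exact ⟨z, min p y, min q x, min r w, min u v, q - min q x, 0, 0, 0,
        p - min p y, 0, 0, 0, by omega, by omega, by omega, by omega, by omega,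
        by omega, by omega, by omega, by omega⟩
    by_cases hX : 0 < x - min q x
    · by_cases hR : 0 < r - min r w
      · by_cases hU : 0 < u - min u v
        · exact ⟨z, min p y, min q x, min r w, min u v, 0, u - min u v, 0, 0,
            0, p - min p y, 0, 0, by omega, by omega, by omega, by omega, by omega,
            by omega, by omega, by omega, by omega⟩
        by_cases hV : 0 < v - min u v
        · exact ⟨z, min p y, min q x, min r w, min u v, 0, 0, v - min u v, 0,
            0, r - min r w, 0, 0, by omega, by omega, by omega, by omega, by omega,
            by omega, by omega, by omega, by omega⟩
        · exact ⟨z, min p y, min q x, min r w, min u v, 0, 0, 0, 0,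
            0, p - min p y, 0, 0, by omega, by omega, by omega, by omega, by omega,
            by omega, by omega, by omega, by omega⟩
      · by_cases hW : 0 < w - min r w
        · exact ⟨z, min p y, min q x, min r w, min u v, 0, 0, x - min q x, 0,
            w - min r w, 0, 0, 0, by omega, by omega, by omega, by omega, by omega,
            by omega, by omega, by omega, by omega⟩
        · exact ⟨z, min p y, min q x, min r w, min u v, 0, 0, p - min p y, 0,
            0, 0, 0, 0, by omega, by omega, by omega, by omega, by omega,
            by omega, by omega, by omega, by omega⟩
    · exact ⟨z, min p y, min q x, min r w, min u v, 0, 0, 0, 0,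
        p - min p y, 0, 0, 0, by omega, by omega, by omega, by omega, by omega,
        by omega, by omega, by omega, by omega⟩
  by_cases hY : 0 < y - min p y
  · by_cases hX : 0 < x - min q x
    · exact ⟨z, min p y, min q x, min r w, min u v, 0, x - min q x, 0, 0,
        0, 0, y - min p y, 0, by omega, by omega, by omega, by omega, by omega,
        by omega, by omega, by omega, by omega⟩
    by_cases hQ : 0 < q - min q x
    · by_cases hW : 0 < w - min r w
      · by_cases hV : 0 < v - min u v
        · exact ⟨z, min p y, min q x, min r w, min u v, v - min u v, 0, 0, 0,
            0, 0, 0, y - min p y, by omega, by omega, by omega, by omega, by omega,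
            by omega, by omega, by omega, by omega⟩
        by_cases hU : 0 < u - min u v
        · exact ⟨z, min p y, min q x, min r w, min u v, 0, 0, 0, u - min u v,
            0, 0, 0, w - min r w, by omega, by omega, by omega, by omega, by omega,
            by omega, by omega, by omega, by omega⟩
        · exact ⟨z, min p y, min q x, min r w, min u v, 0, 0, 0, 0,
            0, 0, 0, y - min p y, by omega, by omega, by omega, by omega, by omega,
            by omega, by omega, by omega, by omega⟩
      · by_cases hR : 0 < r - min r w
        · exact ⟨z, min p y, min q x, min r w, min u v, 0, 0, 0, q - min q x,
            0, 0, r - min r w, 0, by omega, by omega, by omega, by omega, by omega,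
            by omega, by omega, by omega, by omega⟩
        · exact ⟨z, min p y, min q x, min r w, min u v, 0, 0, 0, y - min p y,
            0, 0, 0, 0, by omega, by omega, by omega, by omega, by omega,
            by omega, by omega, by omega, by omega⟩
    · exact ⟨z, min p y, min q x, min r w, min u v, 0, 0, 0, 0,
        0, 0, y - min p y, 0, by omega, by omega, by omega, by omega, by omega,
        by omega, by omega, by omega, by omega⟩
  · by_cases hQ : 0 < q - min q x
    · exact ⟨z, min p y, min q x, min r w, min u v, q - min q x, 0, 0, 0,
        0, 0, 0, 0, by omega, by omega, by omega, by omega, by omega,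
        by omega, by omega, by omega, by omega⟩
    by_cases hX : 0 < x - min q x
    · exact ⟨z, min p y, min q x, min r w, min u v, 0, x - min q x, 0, 0,
        0, 0, 0, 0, by omega, by omega, by omega, by omega, by omega,
        by omega, by omega, by omega, by omega⟩
    · exact ⟨z, min p y, min q x, min r w, min u v, 0, 0, 0, 0,
        0, 0, 0, 0, by omega, by omega, by omega, by omega, by omega,
        by omega, by omega, by omega, by omega⟩

lemma split4 (s a b c d : ℕ) (h : s ≤ a+b+c+d) :
    ∃ da db dc dd : ℕ, da ≤ a ∧ db ≤ b ∧ dc ≤ c ∧ dd ≤ d ∧ da+db+dc+dd = s :=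
  ⟨min s a, min (s - min s a) b, min (s - min s a - min (s - min s a) b) c,
    s - min s a - min (s - min s a) b - min (s - min s a - min (s - min s a) b) c,
    by omega, by omega, by omega, by omega, by omega⟩

/-- Key arithmetic lemma: we can pick `t`-values within the nine balanced classes,
half of the total, preserving both balances. -/
lemma choose_t (p q r u z v w x y H : ℕ)
    (h1 : p+q+r = w+x+y) (h2 : p+u+w = r+v+y)
    (hsum : p+q+r+u+z+v+w+x+y = 2*H) (hH : 12 ∣ H) :
    ∃ tp tq tr tu tz tv tw tx ty : ℕ,
      tp ≤ p ∧ tq ≤ q ∧ tr ≤ r ∧ tu ≤ u ∧ tz ≤ z ∧ tv ≤ v ∧ tw ≤ w ∧ tx ≤ x ∧ ty ≤ y ∧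
      tp+tq+tr+tu+tz+tv+tw+tx+ty = H ∧
      tp+tq+tr = tw+tx+ty ∧ tp+tu+tw = tr+tv+ty := by
  obtain ⟨c1,c2,c3,c4,c5,c6,c7,c8,c9,c10,c11,c12,c13,e1,e2,e3,e4,e5,e6,e7,e8,e9⟩ :=
    decomp p q r u z v w x y h1 h2
  obtain ⟨x1,x2,x3,x4,hx1,hx2,hx3,hx4,hxs⟩ :=
    subsetSum c1 (c2+c3+c4+c5) (c6+c7+c8+c9) (c10+c11+c12+c13) H (by omega) hH
  obtain ⟨d2,d3,d4,d5,hd2,hd3,hd4,hd5,hds⟩ := split4 x2 c2 c3 c4 c5 hx2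
  obtain ⟨g6,g7,g8,g9,hg6,hg7,hg8,hg9,hgs⟩ := split4 x3 c6 c7 c8 c9 hx3
  obtain ⟨f10,f11,f12,f13,hf10,hf11,hf12,hf13,hfs⟩ := split4 x4 c10 c11 c12 c13 hx4
  refine ⟨d2 + g8 + f10 + f11,
          d3 + g6 + g9 + 2*f13,
          d4 + g7 + f11 + f12,
          d5 + g7 + g9 + 2*f12,
          x1,
          d5 + g6 + g8 + 2*f10,
          d4 + g6 + f10 + f13,
          d3 + g7 + g8 + 2*f11,
          d2 + g9 + f12 + f13, ?_, ?_, ?_, ?_, ?_, ?_, ?_, ?_, ?_, ?_, ?_, ?_⟩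
  · clear * - e1 hd2 hg8 hf10 hf11; omega
  · clear * - e2 hd3 hg6 hg9 hf13; omega
  · clear * - e3 hd4 hg7 hf11 hf12; omega
  · clear * - e4 hd5 hg7 hg9 hf12; omega
  · clear * - e5 hx1; omega
  · clear * - e6 hd5 hg6 hg8 hf10; omega
  · clear * - e7 hd4 hg6 hf10 hf13; omega
  · clear * - e8 hd3 hg7 hg8 hf11; omega
  · clear * - e9 hd2 hg9 hf12 hf13; omega
  · clear * - hds hgs hfs hxs; omega
  · clear * -; omega
  · clear * -; omega

section Helpers
variable {γ : Type*} [DecidableEq γ] [Fintype γ]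

lemma part3 (S P Q : Finset γ) (hPQ : Disjoint P Q) :
    (S ∩ P).card + (S ∩ Q).card + (S ∩ ((Finset.univ \ P) \ Q)).card = S.card := by
  have hu : (S ∩ P) ∪ (S ∩ Q) ∪ (S ∩ ((Finset.univ \ P) \ Q)) = S := by
    ext a
    simp only [Finset.mem_union, Finset.mem_inter, Finset.mem_sdiff, Finset.mem_univ,
      true_and]
    tauto
  have d1 : Disjoint (S ∩ P) (S ∩ Q) :=
    hPQ.mono (Finset.inter_subset_right) (Finset.inter_subset_right)
  have d2 : Disjoint (S ∩ P) (S ∩ ((Finset.univ \ P) \ Q)) := by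
    apply Finset.disjoint_left.mpr
    intro a ha hb
    simp only [Finset.mem_inter, Finset.mem_sdiff] at ha hb
    exact hb.2.1.2 ha.2
  have d3 : Disjoint (S ∩ Q) (S ∩ ((Finset.univ \ P) \ Q)) := by
    apply Finset.disjoint_left.mpr
    intro a ha hb
    simp only [Finset.mem_inter, Finset.mem_sdiff] at ha hb
    exact hb.2.2 ha.2
  calc (S ∩ P).card + (S ∩ Q).card + (S ∩ ((Finset.univ \ P) \ Q)).card
      = ((S ∩ P) ∪ (S ∩ Q) ∪ (S ∩ ((Finset.univ \ P) \ Q))).card := by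
        rw [Finset.card_union_of_disjoint (by exact Finset.disjoint_union_left.mpr ⟨d2, d3⟩),
          Finset.card_union_of_disjoint d1]
    _ = S.card := by rw [hu]

omit [Fintype γ] in
lemma card_union3 {a b c : Finset γ} (hab : Disjoint a b) (hac : Disjoint a c)
    (hbc : Disjoint b c) : (a ∪ b ∪ c).card = a.card + b.card + c.card := by
  rw [Finset.card_union_of_disjoint (Finset.disjoint_union_left.mpr ⟨hac, hbc⟩),
    Finset.card_union_of_disjoint hab]
end Helpers

lemma exists_T {n m : ℕ} (hnm : n = 2*m) (hm : 12 ∣ m) (A A' B B' : Finset (Fin n))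
    (hA : A.card = A'.card) (hB : B.card = B'.card) :
    ∃ T : Finset (Fin n), T.card = m ∧ (T ∩ A).card = (T ∩ A').card ∧
      (T ∩ B).card = (T ∩ B').card := by
  classical
  set D1 := A \ A' with hD1
  set Dm := A' \ A with hDm
  set D0 := (Finset.univ \ D1) \ Dm with hD0
  set G1 := B \ B' with hG1
  set Gm := B' \ B with hGm
  set G0 := (Finset.univ \ G1) \ Gm with hG0
  have hDdisj : Disjoint D1 Dm := by
    apply Finset.disjoint_left.mpr; intro a ha hb
    simp only [hD1, hDm, Finset.mem_sdiff] at ha hb; exact hb.2 ha.1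
  have hGdisj : Disjoint G1 Gm := by
    apply Finset.disjoint_left.mpr; intro a ha hb
    simp only [hG1, hGm, Finset.mem_sdiff] at ha hb; exact hb.2 ha.1
  have hD10 : Disjoint D1 D0 := by
    apply Finset.disjoint_left.mpr; intro a ha hb
    rw [hD0] at hb
    simp only [Finset.mem_sdiff] at hb; exact hb.1.2 ha
  have hDm0 : Disjoint Dm D0 := by
    apply Finset.disjoint_left.mpr; intro a ha hb
    rw [hD0] at hb
    simp only [Finset.mem_sdiff] at hb; exact hb.2 ha
  have hG10 : Disjoint G1 G0 := by
    apply Finset.disjoint_left.mpr; intro a ha hb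
    rw [hG0] at hb
    simp only [Finset.mem_sdiff] at hb; exact hb.1.2 ha
  have hGm0 : Disjoint Gm G0 := by
    apply Finset.disjoint_left.mpr; intro a ha hb
    rw [hG0] at hb
    simp only [Finset.mem_sdiff] at hb; exact hb.2 ha
  -- |D1| = |Dm| and |G1| = |Gm|
  have hDeq : D1.card = Dm.card := by
    have e1 : D1.card + (A ∩ A').card = A.card := by
      rw [hD1]; exact Finset.card_sdiff_add_card_inter A A'
    have e2 : Dm.card + (A ∩ A').card = A'.card := by
      rw [hDm, Finset.inter_comm A A']; exact Finset.card_sdiff_add_card_inter A' A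
    clear * - e1 e2 hA; omega
  have hGeq : G1.card = Gm.card := by
    have e1 : G1.card + (B ∩ B').card = B.card := by
      rw [hG1]; exact Finset.card_sdiff_add_card_inter B B'
    have e2 : Gm.card + (B ∩ B').card = B'.card := by
      rw [hGm, Finset.inter_comm B B']; exact Finset.card_sdiff_add_card_inter B' B
    clear * - e1 e2 hB; omega
  -- decompositions
  have hD1p := part3 D1 G1 Gm hGdisj
  have hDmp := part3 Dm G1 Gm hGdisj
  have hD0p := part3 D0 G1 Gm hGdisj
  rw [← hG0] at hD1p hDmp hD0p
  have hG1p := part3 G1 D1 Dm hDdisj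
  have hGmp := part3 Gm D1 Dm hDdisj
  rw [← hD0, Finset.inter_comm G1 D1, Finset.inter_comm G1 Dm, Finset.inter_comm G1 D0]
    at hG1p
  rw [← hD0, Finset.inter_comm Gm D1, Finset.inter_comm Gm Dm, Finset.inter_comm Gm D0]
    at hGmp
  have htot := part3 Finset.univ D1 Dm hDdisj
  rw [← hD0, Finset.univ_inter, Finset.univ_inter, Finset.univ_inter] at htot
  have hcard_univ : (Finset.univ : Finset (Fin n)).card = 2*m := by
    rw [Finset.card_univ, Fintype.card_fin]; omega
  have hbal1 : (D1 ∩ G1).card + (D1 ∩ G0).card + (D1 ∩ Gm).card =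
      (Dm ∩ G1).card + (Dm ∩ G0).card + (Dm ∩ Gm).card := by
    clear * - hD1p hDmp hDeq; omega
  have hbal2 : (D1 ∩ G1).card + (D0 ∩ G1).card + (Dm ∩ G1).card =
      (D1 ∩ Gm).card + (D0 ∩ Gm).card + (Dm ∩ Gm).card := by
    clear * - hG1p hGmp hGeq; omega
  have htotal : (D1 ∩ G1).card + (D1 ∩ G0).card + (D1 ∩ Gm).card + (D0 ∩ G1).card +
      (D0 ∩ G0).card + (D0 ∩ Gm).card + (Dm ∩ G1).card + (Dm ∩ G0).card +
      (Dm ∩ Gm).card = 2*m := by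
    clear * - hD1p hDmp hD0p htot hcard_univ; omega
  obtain ⟨tp,tq,tr,tu,tz,tv,tw,tx,ty, bp,bq,br,bu,bz,bv,bw,bx,byy, hts, hb1, hb2⟩ :=
    choose_t (D1 ∩ G1).card (D1 ∩ G0).card (D1 ∩ Gm).card (D0 ∩ G1).card
      (D0 ∩ G0).card (D0 ∩ Gm).card (Dm ∩ G1).card (Dm ∩ G0).card (Dm ∩ Gm).card m
      (by clear * - hbal1; omega) (by clear * - hbal2; omega)
      (by clear * - htotal; omega) hm
  obtain ⟨SP, hSPs, hSPc⟩ := Finset.exists_subset_card_eq bp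
  obtain ⟨SQ, hSQs, hSQc⟩ := Finset.exists_subset_card_eq bq
  obtain ⟨SR, hSRs, hSRc⟩ := Finset.exists_subset_card_eq br
  obtain ⟨SU, hSUs, hSUc⟩ := Finset.exists_subset_card_eq bu
  obtain ⟨SZ, hSZs, hSZc⟩ := Finset.exists_subset_card_eq bz
  obtain ⟨SV, hSVs, hSVc⟩ := Finset.exists_subset_card_eq bv
  obtain ⟨SW, hSWs, hSWc⟩ := Finset.exists_subset_card_eq bw
  obtain ⟨SX, hSXs, hSXc⟩ := Finset.exists_subset_card_eq bx
  obtain ⟨SY, hSYs, hSYc⟩ := Finset.exists_subset_card_eq byy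
  set T1 := SP ∪ SQ ∪ SR with hT1
  set T0 := SU ∪ SZ ∪ SV with hT0
  set Tm := SW ∪ SX ∪ SY with hTm
  set T := T1 ∪ T0 ∪ Tm with hT
  have sPD : SP ⊆ D1 := hSPs.trans Finset.inter_subset_left
  have sQD : SQ ⊆ D1 := hSQs.trans Finset.inter_subset_left
  have sRD : SR ⊆ D1 := hSRs.trans Finset.inter_subset_left
  have sUD : SU ⊆ D0 := hSUs.trans Finset.inter_subset_left
  have sZD : SZ ⊆ D0 := hSZs.trans Finset.inter_subset_left
  have sVD : SV ⊆ D0 := hSVs.trans Finset.inter_subset_left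
  have sWD : SW ⊆ Dm := hSWs.trans Finset.inter_subset_left
  have sXD : SX ⊆ Dm := hSXs.trans Finset.inter_subset_left
  have sYD : SY ⊆ Dm := hSYs.trans Finset.inter_subset_left
  have sPG : SP ⊆ G1 := hSPs.trans Finset.inter_subset_right
  have sQG : SQ ⊆ G0 := hSQs.trans Finset.inter_subset_right
  have sRG : SR ⊆ Gm := hSRs.trans Finset.inter_subset_right
  have sUG : SU ⊆ G1 := hSUs.trans Finset.inter_subset_right
  have sZG : SZ ⊆ G0 := hSZs.trans Finset.inter_subset_right
  have sVG : SV ⊆ Gm := hSVs.trans Finset.inter_subset_right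
  have sWG : SW ⊆ G1 := hSWs.trans Finset.inter_subset_right
  have sXG : SX ⊆ G0 := hSXs.trans Finset.inter_subset_right
  have sYG : SY ⊆ Gm := hSYs.trans Finset.inter_subset_right
  have sT1D : T1 ⊆ D1 := by
    rw [hT1]; exact Finset.union_subset (Finset.union_subset sPD sQD) sRD
  have sT0D : T0 ⊆ D0 := by
    rw [hT0]; exact Finset.union_subset (Finset.union_subset sUD sZD) sVD
  have sTmD : Tm ⊆ Dm := by
    rw [hTm]; exact Finset.union_subset (Finset.union_subset sWD sXD) sYD
  have hT1c : T1.card = tp + tq + tr := by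
    rw [hT1, card_union3 (hG10.mono sPG sQG) (hGdisj.mono sPG sRG)
      ((hGm0.symm).mono sQG sRG), hSPc, hSQc, hSRc]
  have hT0c : T0.card = tu + tz + tv := by
    rw [hT0, card_union3 (hG10.mono sUG sZG) (hGdisj.mono sUG sVG)
      ((hGm0.symm).mono sZG sVG), hSUc, hSZc, hSVc]
  have hTmc : Tm.card = tw + tx + ty := by
    rw [hTm, card_union3 (hG10.mono sWG sXG) (hGdisj.mono sWG sYG)
      ((hGm0.symm).mono sXG sYG), hSWc, hSXc, hSYc]
  have hTc : T.card = m := by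
    rw [hT, card_union3 (hD10.mono sT1D sT0D) (hDdisj.mono sT1D sTmD)
      ((hDm0.symm).mono sT0D sTmD), hT1c, hT0c, hTmc]
    clear * - hts; omega
  have hTD1 : T ∩ D1 = T1 := by
    rw [hT, Finset.union_inter_distrib_right, Finset.union_inter_distrib_right,
      Finset.inter_eq_left.mpr sT1D,
      Finset.disjoint_iff_inter_eq_empty.mp (hD10.symm.mono sT0D (le_refl D1)),
      Finset.disjoint_iff_inter_eq_empty.mp (hDdisj.symm.mono sTmD (le_refl D1))]
    simp
  have hTDm : T ∩ Dm = Tm := by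
    rw [hT, Finset.union_inter_distrib_right, Finset.union_inter_distrib_right,
      Finset.inter_eq_left.mpr sTmD,
      Finset.disjoint_iff_inter_eq_empty.mp (hDdisj.mono sT1D (le_refl Dm)),
      Finset.disjoint_iff_inter_eq_empty.mp (hDm0.symm.mono sT0D (le_refl Dm))]
    simp
  have hTG1 : T ∩ G1 = SP ∪ SU ∪ SW := by
    rw [hT, hT1, hT0, hTm]
    rw [Finset.union_inter_distrib_right, Finset.union_inter_distrib_right,
      Finset.union_inter_distrib_right, Finset.union_inter_distrib_right,
      Finset.union_inter_distrib_right, Finset.union_inter_distrib_right,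
      Finset.union_inter_distrib_right, Finset.union_inter_distrib_right]
    rw [Finset.inter_eq_left.mpr sPG, Finset.inter_eq_left.mpr sUG,
      Finset.inter_eq_left.mpr sWG,
      Finset.disjoint_iff_inter_eq_empty.mp (hG10.symm.mono sQG (le_refl G1)),
      Finset.disjoint_iff_inter_eq_empty.mp (hGdisj.symm.mono sRG (le_refl G1)),
      Finset.disjoint_iff_inter_eq_empty.mp (hG10.symm.mono sZG (le_refl G1)),
      Finset.disjoint_iff_inter_eq_empty.mp (hGdisj.symm.mono sVG (le_refl G1)),
      Finset.disjoint_iff_inter_eq_empty.mp (hG10.symm.mono sXG (le_refl G1)),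
      Finset.disjoint_iff_inter_eq_empty.mp (hGdisj.symm.mono sYG (le_refl G1))]
    simp
  have hTGm : T ∩ Gm = SR ∪ SV ∪ SY := by
    rw [hT, hT1, hT0, hTm]
    rw [Finset.union_inter_distrib_right, Finset.union_inter_distrib_right,
      Finset.union_inter_distrib_right, Finset.union_inter_distrib_right,
      Finset.union_inter_distrib_right, Finset.union_inter_distrib_right,
      Finset.union_inter_distrib_right, Finset.union_inter_distrib_right]
    rw [Finset.inter_eq_left.mpr sRG, Finset.inter_eq_left.mpr sVG,
      Finset.inter_eq_left.mpr sYG,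
      Finset.disjoint_iff_inter_eq_empty.mp (hGdisj.mono sPG (le_refl Gm)),
      Finset.disjoint_iff_inter_eq_empty.mp (hGm0.symm.mono sQG (le_refl Gm)),
      Finset.disjoint_iff_inter_eq_empty.mp (hGdisj.mono sUG (le_refl Gm)),
      Finset.disjoint_iff_inter_eq_empty.mp (hGm0.symm.mono sZG (le_refl Gm)),
      Finset.disjoint_iff_inter_eq_empty.mp (hGdisj.mono sWG (le_refl Gm)),
      Finset.disjoint_iff_inter_eq_empty.mp (hGm0.symm.mono sXG (le_refl Gm))]
    simp
  have hTG1c : (T ∩ G1).card = tp + tu + tw := by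
    rw [hTG1, card_union3 (hD10.mono sPD sUD) (hDdisj.mono sPD sWD)
      ((hDm0.symm).mono sUD sWD), hSPc, hSUc, hSWc]
  have hTGmc : (T ∩ Gm).card = tr + tv + ty := by
    rw [hTGm, card_union3 (hD10.mono sRD sVD) (hDdisj.mono sRD sYD)
      ((hDm0.symm).mono sVD sYD), hSRc, hSVc, hSYc]
  have hTA : (T ∩ A).card = (T ∩ (A ∩ A')).card + T1.card := by
    rw [← hTD1]
    have hu : T ∩ A = (T ∩ (A ∩ A')) ∪ (T ∩ D1) := by
      ext a
      simp only [Finset.mem_inter, Finset.mem_union, Finset.mem_sdiff, hD1]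
      tauto
    rw [hu, Finset.card_union_of_disjoint]
    apply Finset.disjoint_left.mpr
    intro a ha hb
    simp only [Finset.mem_inter, Finset.mem_sdiff, hD1] at ha hb
    exact hb.2.2 ha.2.2
  have hTA' : (T ∩ A').card = (T ∩ (A ∩ A')).card + Tm.card := by
    rw [← hTDm]
    have hu : T ∩ A' = (T ∩ (A ∩ A')) ∪ (T ∩ Dm) := by
      ext a
      simp only [Finset.mem_inter, Finset.mem_union, Finset.mem_sdiff, hDm]
      tauto
    rw [hu, Finset.card_union_of_disjoint]
    apply Finset.disjoint_left.mpr
    intro a ha hb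
    simp only [Finset.mem_inter, Finset.mem_sdiff, hDm] at ha hb
    exact hb.2.2 ha.2.1
  have hTB : (T ∩ B).card = (T ∩ (B ∩ B')).card + (T ∩ G1).card := by
    have hu : T ∩ B = (T ∩ (B ∩ B')) ∪ (T ∩ G1) := by
      ext a
      simp only [Finset.mem_inter, Finset.mem_union, Finset.mem_sdiff, hG1]
      tauto
    rw [hu, Finset.card_union_of_disjoint]
    apply Finset.disjoint_left.mpr
    intro a ha hb
    simp only [Finset.mem_inter, Finset.mem_sdiff, hG1] at ha hb
    exact hb.2.2 ha.2.2
  have hTB' : (T ∩ B').card = (T ∩ (B ∩ B')).card + (T ∩ Gm).card := by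
    have hu : T ∩ B' = (T ∩ (B ∩ B')) ∪ (T ∩ Gm) := by
      ext a
      simp only [Finset.mem_inter, Finset.mem_union, Finset.mem_sdiff, hGm]
      tauto
    rw [hu, Finset.card_union_of_disjoint]
    apply Finset.disjoint_left.mpr
    intro a ha hb
    simp only [Finset.mem_inter, Finset.mem_sdiff, hGm] at ha hb
    exact hb.2.2 ha.2.1
  refine ⟨T, hTc, ?_, ?_⟩
  · rw [hTA, hTA', hT1c, hTmc]; clear * - hb1; omega
  · rw [hTB, hTB', hTG1c, hTGmc]; clear * - hb2; omega

lemma card_filter_prod_s15 {N : ℕ} (P : Fin N → Fin N → Prop) [∀ a b, Decidable (P a b)] :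
    (Finset.univ.filter fun x : Fin N × Fin N => P x.1 x.2).card
      = ∑ i : Fin N, (Finset.univ.filter fun j => P i j).card := by
  rw [Finset.card_filter, Fintype.sum_prod_type]
  apply Finset.sum_congr rfl
  intro i _
  rw [Finset.card_filter]

lemma sum_split (m : ℕ) (g : ℕ → ℕ) :
    ∑ i ∈ Finset.range (2*m), g i
      = ∑ i ∈ Finset.range m, (g i + g (m+i)) := by
  rw [Finset.sum_add_distrib, two_mul, Finset.sum_range_add]

lemma fin2_or : ∀ s : Fin 2, s = 0 ∨ s = 1 := by decide

lemma pairhalf {n m : ℕ} (hnm : n = 2*m) (Tk Za Za' : Finset (Fin n))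
    (hZa : Za.card = m) (hZa' : Za'.card = m) (hTk : Tk.card = m)
    (hbal : (Tk ∩ Za).card = (Tk ∩ Za').card) :
    (Za ∩ Tk).card + (Za' ∩ (Finset.univ \ Tk)).card = m ∧
    (Za ∩ (Finset.univ \ Tk)).card + (Za' ∩ Tk).card = m := by
  have e1 : Za ∩ (Finset.univ \ Tk) = Za \ Tk := by ext a; simp
  have e2 : Za' ∩ (Finset.univ \ Tk) = Za' \ Tk := by ext a; simp
  have f1 := Finset.card_sdiff_add_card_inter Za Tk
  have f2 := Finset.card_sdiff_add_card_inter Za' Tk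
  have g1 : (Tk ∩ Za).card = (Za ∩ Tk).card := by rw [Finset.inter_comm]
  have g2 : (Tk ∩ Za').card = (Za' ∩ Tk).card := by rw [Finset.inter_comm]
  rw [e1, e2]
  clear * - f1 f2 g1 g2 hbal hZa hZa' hTk
  omega

lemma bal_compl {n : ℕ} (Tk Z Z' : Finset (Fin n))
    (hbal : (Tk ∩ Z).card = (Tk ∩ Z').card) :
    (Tk ∩ (Finset.univ \ Z)).card = (Tk ∩ (Finset.univ \ Z')).card := by
  have e1 : Tk ∩ (Finset.univ \ Z) = Tk \ Z := by ext a; simp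
  have e2 : Tk ∩ (Finset.univ \ Z') = Tk \ Z' := by ext a; simp
  have f1 := Finset.card_sdiff_add_card_inter Tk Z
  have f2 := Finset.card_sdiff_add_card_inter Tk Z'
  rw [e1, e2]
  clear * - f1 f2 hbal
  omega

theorem stmt15 (n : ℕ) (hn : 24 ∣ n)
    (F₁ F₂ : Fin n → Fin n → Fin 2) (h₁ : IsBinFS (n / 2) F₁) (h₂ : IsBinFS (n / 2) F₂) :
    ∃ F : Fin n → Fin n → Fin 2, IsBinFS (n / 2) F ∧ OrthBin F₁ F ∧ OrthBin F₂ F := by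
  classical
  obtain ⟨k, hk⟩ := hn
  rcases Nat.eq_zero_or_pos n with h0 | hn0
  · subst h0
    refine ⟨F₁, ⟨fun i => i.elim0, fun j => j.elim0⟩, ?_, ?_⟩ <;>
    · intro a b
      simp [Finset.univ_eq_empty]
  set m := n / 2 with hmdef
  have hm2 : n = 2 * m := by omega
  have hm12 : 12 ∣ m := ⟨k, by omega⟩
  set pr : Fin n → Fin n := fun i => ⟨(i.val + m) % n, Nat.mod_lt _ hn0⟩ with hprdef
  have hpr_eq : ∀ (i1 i2 : Fin n), i1.val < m → i2.val = m + i1.val →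
      pr i1 = i2 ∧ pr i2 = i1 := by
    intro i1 i2 h e
    constructor <;> apply Fin.ext <;> simp only [hprdef]
    · rw [Nat.mod_eq_of_lt (by omega)]; omega
    · rw [show i2.val + m = n + i1.val by omega, Nat.add_mod_left,
        Nat.mod_eq_of_lt (by omega)]
  have hex : ∀ i : Fin n, ∃ T : Finset (Fin n), T.card = m ∧
      (T ∩ (Finset.univ.filter fun j => F₁ i j = 0)).card
        = (T ∩ (Finset.univ.filter fun j => F₁ (pr i) j = 0)).card ∧
      (T ∩ (Finset.univ.filter fun j => F₂ i j = 0)).card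
        = (T ∩ (Finset.univ.filter fun j => F₂ (pr i) j = 0)).card := by
    intro i
    exact exists_T hm2 hm12 _ _ _ _ (by rw [h₁.1 i 0, h₁.1 (pr i) 0])
      (by rw [h₂.1 i 0, h₂.1 (pr i) 0])
  choose T hTc hT1 hT2 using hex
  set F : Fin n → Fin n → Fin 2 := fun i j =>
    if i.val < m then (if j ∈ T i then 0 else 1) else (if j ∈ T (pr i) then 1 else 0)
    with hFdef
  have hFlo0 : ∀ i : Fin n, i.val < m →
      (Finset.univ.filter fun j => F i j = 0) = T i := by
    intro i hi
    ext j
    simp only [hFdef, Finset.mem_filter, Finset.mem_univ, true_and, if_pos hi]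
    by_cases hj : j ∈ T i <;> simp [hj]
  have hFlo1 : ∀ i : Fin n, i.val < m →
      (Finset.univ.filter fun j => F i j = 1) = Finset.univ \ T i := by
    intro i hi
    ext j
    simp only [hFdef, Finset.mem_filter, Finset.mem_univ, true_and, if_pos hi,
      Finset.mem_sdiff]
    by_cases hj : j ∈ T i <;> simp [hj]
  have hFhi0 : ∀ i : Fin n, ¬ i.val < m →
      (Finset.univ.filter fun j => F i j = 0) = Finset.univ \ T (pr i) := by
    intro i hi
    ext j
    simp only [hFdef, Finset.mem_filter, Finset.mem_univ, true_and, if_neg hi,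
      Finset.mem_sdiff]
    by_cases hj : j ∈ T (pr i) <;> simp [hj]
  have hFhi1 : ∀ i : Fin n, ¬ i.val < m →
      (Finset.univ.filter fun j => F i j = 1) = T (pr i) := by
    intro i hi
    ext j
    simp only [hFdef, Finset.mem_filter, Finset.mem_univ, true_and, if_neg hi]
    by_cases hj : j ∈ T (pr i) <;> simp [hj]
  have hGcompl : ∀ (L : Fin n → Fin 2),
      (Finset.univ.filter fun j => L j = 1)
        = Finset.univ \ (Finset.univ.filter fun j => L j = 0) := by
    intro L
    ext j
    simp only [Finset.mem_filter, Finset.mem_univ, true_and, Finset.mem_sdiff]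
    rcases fin2_or (L j) with h | h <;> simp [h]
  have hcompl_card : ∀ S : Finset (Fin n), S.card = m → (Finset.univ \ S).card = m := by
    intro S hS
    rw [Finset.card_sdiff_of_subset (Finset.subset_univ _), Finset.card_univ, Fintype.card_fin]
    omega
  have horth : ∀ (G : Fin n → Fin n → Fin 2),
      (∀ (i : Fin n) (a : Fin 2), (Finset.univ.filter fun jj => G i jj = a).card = m) →
      (∀ i : Fin n, (T i ∩ (Finset.univ.filter fun jj => G i jj = 0)).card
          = (T i ∩ (Finset.univ.filter fun jj => G (pr i) jj = 0)).card) →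
      OrthBin G F := by
    intro G hGc hGb a b
    have hsq : n ^ 2 / 4 = m * m := by
      have e : n ^ 2 = m * m * 4 := by rw [hm2]; ring
      rw [e, Nat.mul_div_cancel _ (by norm_num)]
    rw [card_filter_prod_s15 (fun i j => G i j = a ∧ F i j = b), hsq]
    set g : ℕ → ℕ := fun kk => if h : kk < n then
        (Finset.univ.filter fun j => G ⟨kk, h⟩ j = a ∧ F ⟨kk, h⟩ j = b).card else 0
      with hgdef
    have hconv : ∑ i : Fin n, (Finset.univ.filter fun j => G i j = a ∧ F i j = b).card
        = ∑ kk ∈ Finset.range n, g kk := by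
      rw [← Fin.sum_univ_eq_sum_range]
      apply Finset.sum_congr rfl
      intro i _
      simp only [hgdef, i.isLt, dif_pos, Fin.eta]
    rw [hconv, hm2, sum_split m g]
    have hterm : ∀ kk ∈ Finset.range m, g kk + g (m + kk) = m := by
      intro kk hkk
      rw [Finset.mem_range] at hkk
      have h1 : kk < n := by omega
      have h2 : m + kk < n := by omega
      obtain ⟨ep1, ep2⟩ := hpr_eq ⟨kk, h1⟩ ⟨m + kk, h2⟩ hkk rfl
      have hlo : ((⟨kk, h1⟩ : Fin n) : ℕ) < m := hkk
      have hhi : ¬ ((⟨m + kk, h2⟩ : Fin n) : ℕ) < m := by simp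
      have hbal : ∀ a' : Fin 2,
          (T ⟨kk, h1⟩ ∩ (Finset.univ.filter fun jj => G ⟨kk, h1⟩ jj = a')).card
            = (T ⟨kk, h1⟩ ∩ (Finset.univ.filter fun jj => G ⟨m + kk, h2⟩ jj = a')).card := by
        intro a'
        rcases fin2_or a' with rfl | rfl
        · have hb0 := hGb ⟨kk, h1⟩
          rwa [ep1] at hb0
        · have hb0 := hGb ⟨kk, h1⟩
          rw [ep1] at hb0
          have h' := bal_compl _ _ _ hb0
          rwa [← hGcompl (G ⟨kk, h1⟩), ← hGcompl (G ⟨m + kk, h2⟩)] at h'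
      simp only [hgdef, dif_pos h1, dif_pos h2]
      rw [Finset.filter_and, Finset.filter_and]
      rcases fin2_or b with rfl | rfl
      · rw [hFlo0 _ hlo, hFhi0 _ hhi, ep2]
        exact (pairhalf hm2 (T ⟨kk, h1⟩) _ _ (hGc _ a) (hGc _ a) (hTc _) (hbal a)).1
      · rw [hFlo1 _ hlo, hFhi1 _ hhi, ep2]
        exact (pairhalf hm2 (T ⟨kk, h1⟩) _ _ (hGc _ a) (hGc _ a) (hTc _) (hbal a)).2
    rw [Finset.sum_congr rfl hterm, Finset.sum_const, Finset.card_range, smul_eq_mul]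
  refine ⟨F, ⟨?_, ?_⟩, ?_, ?_⟩
  · -- rows
    intro i s
    rcases fin2_or s with rfl | rfl
    · by_cases hi : i.val < m
      · rw [hFlo0 i hi, hTc i]
      · rw [hFhi0 i hi, hcompl_card _ (hTc (pr i))]
    · by_cases hi : i.val < m
      · rw [hFlo1 i hi, hcompl_card _ (hTc i)]
      · rw [hFhi1 i hi, hTc (pr i)]
  · -- columns
    intro j s
    set g : ℕ → ℕ := fun kk =>
      if h : kk < n then (if F ⟨kk, h⟩ j = s then 1 else 0) else 0 with hgdef
    have hcard : (Finset.univ.filter fun i => F i j = s).card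
        = ∑ kk ∈ Finset.range n, g kk := by
      rw [Finset.card_filter, ← Fin.sum_univ_eq_sum_range]
      apply Finset.sum_congr rfl
      intro i _
      simp only [hgdef, i.isLt, dif_pos, Fin.eta]
    rw [hcard, hm2, sum_split m g]
    have hterm : ∀ kk ∈ Finset.range m, g kk + g (m + kk) = 1 := by
      intro kk hkk
      rw [Finset.mem_range] at hkk
      have h1 : kk < n := by omega
      have h2 : m + kk < n := by omega
      obtain ⟨ep1, ep2⟩ := hpr_eq ⟨kk, h1⟩ ⟨m + kk, h2⟩ hkk rfl
      simp only [hgdef, dif_pos h1, dif_pos h2]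
      have e1 : F ⟨kk, h1⟩ j = (if j ∈ T ⟨kk, h1⟩ then 0 else 1) := by
        simp only [hFdef, if_pos (show ((⟨kk, h1⟩ : Fin n) : ℕ) < m from hkk)]
      have e2 : F ⟨m + kk, h2⟩ j = (if j ∈ T ⟨kk, h1⟩ then 1 else 0) := by
        have hge : ¬ ((⟨m + kk, h2⟩ : Fin n) : ℕ) < m := by simp
        simp only [hFdef, if_neg hge]
        rw [ep2]
      rw [e1, e2]
      by_cases hj : j ∈ T ⟨kk, h1⟩ <;> rcases fin2_or s with rfl | rfl <;> simp [hj]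
    rw [Finset.sum_congr rfl hterm, Finset.sum_const, Finset.card_range, smul_eq_mul,
      mul_one]
  · exact horth F₁ (fun i a => h₁.1 i a) hT1
  · exact horth F₂ (fun i a => h₂.1 i a) hT2
end

section
/- Let n ≡ 0 (mod 4) and let F_1, F_2 be orthogonal binary frequency squares of order n. If every pair of rows of F_1⊕F_2 of type α_1 (as defined by the exceptional configurations) forces each such row r to satisfy ψ(r) ∈ {2x, 2x+1} where x = ⌊n/6⌋ and ψ(r) counts occurrences of (0,0) in row r, then the number of rows of type α_1 is at most 3n²/(4(n−2)) < 3n/4 + 2. -/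
/-- Lemma `dubya` for type `α₁` rows: if `F₁` and `F₂` are orthogonal binary
frequency squares of order `n > 8` (here `n ≡ 0 (mod 4)` and `n ≡ 2 (mod 6)`, the
congruence needed for rows of type `α₁` to exist) and `S` is the set of rows of
type `α₁`, so that each `r ∈ S` satisfies `ψ(r) ∈ {2x, 2x+1}` where `x = ⌊n/6⌋`
and `ψ(r)` counts the occurrences of `(0,0)` in row `r` of `F₁ ⊕ F₂`, then
`|S| ≤ 3n²/(4(n−2)) < 3n/4 + 2`. -/
theorem stmt16 (n : ℕ) (h4 : 4 ∣ n) (h6 : n % 6 = 2) (hn : 8 < n)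
    (F₁ F₂ : Fin n → Fin n → Fin 2) (h₁ : IsBinFS (n / 2) F₁) (h₂ : IsBinFS (n / 2) F₂)
    (horth : OrthBin F₁ F₂)
    (S : Finset (Fin n))
    (hS : ∀ r ∈ S,
      (Finset.univ.filter fun c => F₁ r c = 0 ∧ F₂ r c = 0).card = 2 * (n / 6) ∨
      (Finset.univ.filter fun c => F₁ r c = 0 ∧ F₂ r c = 0).card = 2 * (n / 6) + 1) :
    (S.card : ℝ) ≤ 3 * n ^ 2 / (4 * ((n : ℝ) - 2)) ∧
    3 * (n : ℝ) ^ 2 / (4 * ((n : ℝ) - 2)) < 3 * n / 4 + 2 := by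
  set x := n / 6 with hx
  have hn6 : n = 6 * x + 2 := by omega
  have hx1 : 1 ≤ x := by omega
  -- total count of (0,0) cells
  have htot := horth 0 0
  -- decompose total count row by row
  have hsplit : (Finset.univ.filter fun p : Fin n × Fin n =>
      F₁ p.1 p.2 = 0 ∧ F₂ p.1 p.2 = 0).card =
      ∑ i : Fin n, (Finset.univ.filter fun c => F₁ i c = 0 ∧ F₂ i c = 0).card := by
    rw [Finset.card_filter]
    rw [Fintype.sum_prod_type]
    simp only [Finset.card_filter]
  -- lower bound the sum over S
  have hlb : S.card * (2 * x) ≤ ∑ i : Fin n,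
      (Finset.univ.filter fun c => F₁ i c = 0 ∧ F₂ i c = 0).card := by
    calc S.card * (2 * x)
        = ∑ _i ∈ S, 2 * x := by rw [Finset.sum_const, smul_eq_mul]
      _ ≤ ∑ i ∈ S, (Finset.univ.filter fun c => F₁ i c = 0 ∧ F₂ i c = 0).card := by
          apply Finset.sum_le_sum
          intro i hi
          rcases hS i hi with h | h <;> omega
      _ ≤ ∑ i : Fin n, (Finset.univ.filter fun c => F₁ i c = 0 ∧ F₂ i c = 0).card := by
          exact Finset.sum_le_sum_of_subset (Finset.subset_univ S)
  rw [← hsplit, htot] at hlb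
  -- n^2/4 is exact
  have h4sq : 4 ∣ n ^ 2 := dvd_trans h4 (dvd_pow_self n (by norm_num))
  have hnat : S.card * (2 * x) * 4 ≤ n ^ 2 := by
    have := Nat.mul_le_mul_right 4 hlb
    omega
  have hxR : ((n : ℝ) - 2) = 6 * (x : ℝ) := by
    have : (n : ℝ) = 6 * x + 2 := by exact_mod_cast congrArg (Nat.cast : ℕ → ℝ) hn6
    linarith
  have hxpos : (0 : ℝ) < (x : ℝ) := by exact_mod_cast hx1
  have hnR : (S.card : ℝ) * (2 * x) * 4 ≤ (n : ℝ) ^ 2 := by exact_mod_cast hnat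
  constructor
  · rw [le_div_iff₀ (by rw [hxR]; positivity : (0:ℝ) < 4 * ((n:ℝ) - 2))]
    rw [hxR]
    nlinarith
  · have hnR2 : (8 : ℝ) < n := by exact_mod_cast hn
    rw [div_lt_iff₀ (by linarith : (0:ℝ) < 4 * ((n:ℝ) - 2))]
    nlinarith
end
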